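/- arXiv:2404.08500 — 12 statements merged into one kernel-verified Lean document; each statement's English description precedes it below -/
import Mathlib

section
/- Let k ≥ 0 and 0 ≤ q ≤ 1 with either k > 0 or q < 1. Then there exists a constant C = C(k,q) > 0 such that for all β > 0 and all x ≥ 0 one has (x²+1)^{k/2} · ∫_x^∞ (y²+1)^{-(k+q)/2} e^{β(x-y)} dy ≤ C β^{q-1}. -/
open MeasureTheory Set Real

/-!
Write ⟨y⟩ = (y² + 1)^{1/2}. For q < 1, monotonicity gives ⟨x⟩^k ⟨y⟩^{-k} ≤ 1 and
⟨y⟩^{-q} ≤ (y - x)^{-q} for y > x ≥ 0, so after the translation t = y - x the integral is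
bounded by ∫₀^∞ t^{-q} e^{-βt} dt = Γ(1 - q) β^{q-1}. For q = 1 (so k > 0) the exponential is
bounded by 1 and ⟨y⟩ ≥ (y + 1)/√2, so the integral is at most 2^{(k+1)/2} (x + 1)^{-k}/k,
which ⟨x⟩^k ≤ (x + 1)^k compensates.
-/

section Translation

variable {E : Type*} [NormedAddCommGroup E]

theorem integrableOn_Ioi_comp_add_right_iff (f : ℝ → E) (a c : ℝ) :
    IntegrableOn (fun y => f (y + c)) (Ioi a) ↔ IntegrableOn f (Ioi (a + c)) := by
  simpa [Function.comp_def] using (measurePreserving_add_right volume c).integrableOn_comp_preimage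
    (MeasurableEquiv.addRight c).measurableEmbedding (f := f) (s := Ioi (a + c))

theorem integral_comp_add_right_Ioi [NormedSpace ℝ E] (f : ℝ → E) (a c : ℝ) :
    ∫ y in Ioi a, f (y + c) = ∫ t in Ioi (a + c), f t := by
  simpa using (measurePreserving_add_right volume c).setIntegral_preimage_emb
    (MeasurableEquiv.addRight c).measurableEmbedding f (Ioi (a + c))

end Translation

theorem integral_rpow_neg_mul_exp_neg_mul_Ioi {q β : ℝ} (hq : q < 1) (hβ : 0 < β) :
    ∫ t in Ioi 0, t ^ (-q) * exp (-(β * t)) = Gamma (1 - q) * β ^ (q - 1) := by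
  have h := integral_rpow_mul_exp_neg_mul_Ioi (sub_pos.2 hq) hβ
  rw [sub_sub_cancel_left, one_div, inv_rpow hβ.le, ← rpow_neg hβ.le, neg_sub] at h
  rw [h, mul_comm]

theorem sq_add_one_rpow_mul_rpow_neg_le {k q x y : ℝ} (hk : 0 ≤ k) (hq : 0 ≤ q) (hx : 0 ≤ x)
    (hxy : x < y) :
    (x ^ 2 + 1) ^ (k / 2) * (y ^ 2 + 1) ^ (-(k + q) / 2) ≤ (y - x) ^ (-q) := by
  have hy : 0 < y ^ 2 + 1 := by positivity
  have hxy' : (x ^ 2 + 1) ^ (k / 2) ≤ (y ^ 2 + 1) ^ (k / 2) :=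
    rpow_le_rpow (by positivity) (by nlinarith) (by positivity)
  have hyx : (y ^ 2 + 1) ^ (-q / 2) ≤ (y - x) ^ (-q) :=
    calc (y ^ 2 + 1) ^ (-q / 2) ≤ ((y - x) ^ 2) ^ (-q / 2) :=
          rpow_le_rpow_of_nonpos (pow_pos (sub_pos.2 hxy) 2) (by nlinarith) (by linarith)
      _ = (y - x) ^ (-q) := by
          rw [← rpow_two, ← rpow_mul (sub_nonneg.2 hxy.le)]
          ring_nf
  calc (x ^ 2 + 1) ^ (k / 2) * (y ^ 2 + 1) ^ (-(k + q) / 2)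
      = (x ^ 2 + 1) ^ (k / 2) / (y ^ 2 + 1) ^ (k / 2) * (y ^ 2 + 1) ^ (-q / 2) := by
        rw [show -(k + q) / 2 = -(k / 2) + -q / 2 by ring, rpow_add hy, rpow_neg hy.le]
        ring
    _ ≤ 1 * (y - x) ^ (-q) :=
        mul_le_mul (div_le_one_of_le₀ hxy' (by positivity)) hyx (by positivity) zero_le_one
    _ = (y - x) ^ (-q) := one_mul _

theorem sq_add_one_rpow_neg_le {s y : ℝ} (hs : 0 ≤ s) (hy : 0 ≤ y) :
    (y ^ 2 + 1) ^ (-s / 2) ≤ 2 ^ (s / 2) * (y + 1) ^ (-s) := by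
  have hy' : 0 < y ^ 2 + 1 := by positivity
  calc (y ^ 2 + 1) ^ (-s / 2) = 2 ^ (s / 2) * (2 * (y ^ 2 + 1)) ^ (-s / 2) := by
        rw [mul_rpow zero_le_two hy'.le, ← mul_assoc, ← rpow_add zero_lt_two,
          show s / 2 + -s / 2 = 0 by ring, rpow_zero, one_mul]
    _ ≤ 2 ^ (s / 2) * ((y + 1) ^ 2) ^ (-s / 2) := by
        gcongr 2 ^ (s / 2) * ?_
        exact rpow_le_rpow_of_nonpos (by positivity) (by nlinarith [sq_nonneg (y - 1)])
          (by linarith)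
    _ = 2 ^ (s / 2) * (y + 1) ^ (-s) := by
        rw [← rpow_two, ← rpow_mul (by linarith)]
        ring_nf

theorem integral_Ioi_add_one_rpow_neg {k x : ℝ} (hk : 0 < k) (hx : -1 < x) :
    ∫ y in Ioi x, (y + 1) ^ (-(k + 1)) = (x + 1) ^ (-k) / k := by
  rw [integral_comp_add_right_Ioi (fun t => t ^ (-(k + 1))) x 1,
    integral_Ioi_rpow_of_lt (by linarith) (by linarith), show -(k + 1) + 1 = -k by ring,
    neg_div_neg_eq]

theorem weighted_exp_integral_le_Gamma_mul_rpow {k q β x : ℝ} (hk : 0 ≤ k) (hq0 : 0 ≤ q)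
    (hq1 : q < 1) (hβ : 0 < β) (hx : 0 ≤ x) :
    (x ^ 2 + 1) ^ (k / 2) * ∫ y in Ioi x, (y ^ 2 + 1) ^ (-(k + q) / 2) * exp (β * (x - y))
      ≤ Gamma (1 - q) * β ^ (q - 1) := by
  set F : ℝ → ℝ := fun t => t ^ (-q) * exp (-(β * t))
  have hF : IntegrableOn F (Ioi 0) := by
    simpa [F, neg_mul] using
      integrableOn_rpow_mul_exp_neg_mul_rpow (p := 1) (by linarith : -1 < -q) one_pos hβ
  have hshift := integral_comp_add_right_Ioi F x (-x)
  rw [add_neg_cancel] at hshift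
  rw [← integral_const_mul, ← integral_rpow_neg_mul_exp_neg_mul_Ioi hq1 hβ, ← hshift]
  refine integral_mono_of_nonneg (ae_of_all _ fun y => by positivity)
    ((integrableOn_Ioi_comp_add_right_iff F x (-x)).2 (by rwa [add_neg_cancel])) ?_
  filter_upwards [ae_restrict_mem measurableSet_Ioi] with y (hy : x < y)
  rw [← mul_assoc, show β * (x - y) = -(β * (y + -x)) by ring, ← sub_eq_add_neg]
  exact mul_le_mul_of_nonneg_right (sq_add_one_rpow_mul_rpow_neg_le hk hq0 hx hy) (exp_nonneg _)

theorem weighted_exp_integral_le_two_rpow_div {k β x : ℝ} (hk : 0 < k) (hβ : 0 ≤ β)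
    (hx : 0 ≤ x) :
    (x ^ 2 + 1) ^ (k / 2) * ∫ y in Ioi x, (y ^ 2 + 1) ^ (-(k + 1) / 2) * exp (β * (x - y))
      ≤ 2 ^ ((k + 1) / 2) / k := by
  have hdom : IntegrableOn (fun y => 2 ^ ((k + 1) / 2) * (y + 1) ^ (-(k + 1))) (Ioi x) :=
    (integrableOn_add_rpow_Ioi_of_lt (by linarith) (by linarith)).const_mul _
  have hbound : ∫ y in Ioi x, (y ^ 2 + 1) ^ (-(k + 1) / 2) * exp (β * (x - y))
      ≤ 2 ^ ((k + 1) / 2) * ((x + 1) ^ (-k) / k) := by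
    rw [← integral_Ioi_add_one_rpow_neg hk (by linarith), ← integral_const_mul]
    refine integral_mono_of_nonneg (ae_of_all _ fun y => by positivity) hdom ?_
    filter_upwards [ae_restrict_mem measurableSet_Ioi] with y (hy : x < y)
    have hexp : exp (β * (x - y)) ≤ 1 := exp_le_one_iff.2 (by nlinarith)
    calc (y ^ 2 + 1) ^ (-(k + 1) / 2) * exp (β * (x - y)) ≤ (y ^ 2 + 1) ^ (-(k + 1) / 2) :=
          mul_le_of_le_one_right (by positivity) hexp
      _ ≤ _ := sq_add_one_rpow_neg_le (by linarith) (by linarith)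
  have hweight : (x ^ 2 + 1) ^ (k / 2) ≤ (x + 1) ^ k := by
    calc (x ^ 2 + 1) ^ (k / 2) ≤ ((x + 1) ^ 2) ^ (k / 2) :=
          rpow_le_rpow (by positivity) (by nlinarith) (by positivity)
      _ = (x + 1) ^ k := by
          rw [← rpow_two, ← rpow_mul (by linarith)]
          ring_nf
  calc (x ^ 2 + 1) ^ (k / 2) * ∫ y in Ioi x, (y ^ 2 + 1) ^ (-(k + 1) / 2) * exp (β * (x - y))
      ≤ (x + 1) ^ k * (2 ^ ((k + 1) / 2) * ((x + 1) ^ (-k) / k)) :=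
        mul_le_mul hweight hbound (setIntegral_nonneg measurableSet_Ioi fun y _ => by positivity)
          (by positivity)
    _ = 2 ^ ((k + 1) / 2) / k := by
        rw [rpow_neg (by linarith)]
        field_simp

/-- Lemma C.1 (i): weighted exponential integral estimate on `[x, ∞)`. -/
theorem stmt_0 (k q : ℝ) (hk : 0 ≤ k) (hq0 : 0 ≤ q) (hq1 : q ≤ 1)
    (hkq : 0 < k ∨ q < 1) :
    ∃ C : ℝ, 0 < C ∧ ∀ β : ℝ, 0 < β → ∀ x : ℝ, 0 ≤ x →
      (x ^ 2 + 1) ^ (k / 2) *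
        (∫ y in Set.Ioi x, (y ^ 2 + 1) ^ (-(k + q) / 2) * Real.exp (β * (x - y)))
      ≤ C * β ^ (q - 1) := by
  rcases hq1.lt_or_eq with hq | rfl
  · exact ⟨Gamma (1 - q), Gamma_pos_of_pos (sub_pos.2 hq), fun β hβ x hx =>
      weighted_exp_integral_le_Gamma_mul_rpow hk hq0 hq hβ hx⟩
  · have hk_pos : 0 < k := hkq.resolve_right (lt_irrefl 1)
    refine ⟨2 ^ ((k + 1) / 2) / k, by positivity, fun β hβ x hx => ?_⟩
    rw [sub_self, rpow_zero, mul_one]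
    exact weighted_exp_integral_le_two_rpow_div hk_pos hβ.le hx
end

section
/- For every k > 0 and every x ≥ 0 one has (x²+1)^{k/2} · ∫_x^∞ (y²+1)^{-(k+1)/2} dy ≤ 2^{(k+1)/2}/k. -/
/-! Since `(y + 1)² ≤ 2 (y² + 1)`, the integrand is at most `2^{(k+1)/2} (y + 1)^{-(k+1)}`, whose
integral over `(x, ∞)` is `2^{(k+1)/2} (x + 1)^{-k} / k`; and for `x ≥ 0` the weight
`(x² + 1)^{k/2}` is at most `(x + 1)^k`, which cancels `(x + 1)^{-k}`. -/

open MeasureTheory Set Real Filter Topology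

theorem Real.sq_add_one_rpow_le_add_one_rpow {x a : ℝ} (hx : 0 ≤ x) (ha : 0 ≤ a) :
    (x ^ 2 + 1) ^ a ≤ (x + 1) ^ (2 * a) := by
  rw [rpow_mul (by linarith), rpow_two]
  exact rpow_le_rpow (by positivity) (by nlinarith) ha

theorem Real.sq_add_one_rpow_le_of_nonpos {y p : ℝ} (hy : 0 < y + 1) (hp : p ≤ 0) :
    (y ^ 2 + 1) ^ p ≤ 2 ^ (-p) * (y + 1) ^ (2 * p) := by
  have hsq : (y + 1) ^ 2 / 2 ≤ y ^ 2 + 1 := by nlinarith [sq_nonneg (y - 1)]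
  calc (y ^ 2 + 1) ^ p ≤ ((y + 1) ^ 2 / 2) ^ p := rpow_le_rpow_of_nonpos (by positivity) hsq hp
    _ = 2 ^ (-p) * (y + 1) ^ (2 * p) := by
      rw [div_rpow (by positivity) zero_le_two, rpow_neg zero_le_two, rpow_mul hy.le, rpow_two,
        div_eq_inv_mul]

theorem integral_Ioi_add_rpow_of_lt {a c m : ℝ} (ha : a < -1) (hc : -m < c) :
    ∫ x in Ioi c, (x + m) ^ a = -(c + m) ^ (a + 1) / (a + 1) := by
  have hd : ∀ x ∈ Ici c, HasDerivAt (fun t ↦ (t + m) ^ (a + 1) / (a + 1)) ((x + m) ^ a) x := by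
    intro x hx
    convert! ((hasDerivAt_id' x).add_const m).rpow_const (p := a + 1)
      (Or.inl (by linarith [mem_Ici.mp hx])) |>.div_const (a + 1) using 1
    field_simp [show a + 1 ≠ 0 by linarith]
    ring_nf
  have ht : Tendsto (fun t ↦ (t + m) ^ (a + 1) / (a + 1)) atTop (𝓝 (0 / (a + 1))) := by
    rw [← neg_neg (a + 1)]
    exact (tendsto_rpow_neg_atTop (by linarith)).comp
      (tendsto_atTop_add_const_right _ m tendsto_id) |>.div_const _
  rw [integral_Ioi_of_hasDerivAt_of_tendsto' hd (integrableOn_add_rpow_Ioi_of_lt ha hc) ht]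
  ring

theorem integral_Ioi_sq_add_one_rpow_le {k x : ℝ} (hk : 0 < k) (hx : -1 < x) :
    ∫ y in Ioi x, (y ^ 2 + 1) ^ (-(k + 1) / 2) ≤ 2 ^ ((k + 1) / 2) * ((x + 1) ^ (-k) / k) := by
  have hbound : ∀ y ∈ Ioi x,
      (y ^ 2 + 1) ^ (-(k + 1) / 2) ≤ 2 ^ ((k + 1) / 2) * (y + 1) ^ (-(k + 1)) := fun y hy ↦ by
    convert sq_add_one_rpow_le_of_nonpos (y := y) (p := -(k + 1) / 2) (by linarith [mem_Ioi.mp hy])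
      (by linarith) using 3 <;> ring
  have hdom : IntegrableOn (fun y ↦ 2 ^ ((k + 1) / 2) * (y + 1) ^ (-(k + 1))) (Ioi x) :=
    (integrableOn_add_rpow_Ioi_of_lt (by linarith) (by linarith)).const_mul _
  have hint : IntegrableOn (fun y : ℝ ↦ (y ^ 2 + 1) ^ (-(k + 1) / 2)) (Ioi x) := by
    have hcont : Continuous fun y : ℝ ↦ (y ^ 2 + 1) ^ (-(k + 1) / 2) :=
      (by fun_prop : Continuous fun y : ℝ ↦ y ^ 2 + 1).rpow_const fun y ↦ Or.inl (by positivity)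
    refine hdom.mono' hcont.aestronglyMeasurable ?_
    filter_upwards [ae_restrict_mem measurableSet_Ioi] with y hy
    rw [norm_of_nonneg (by positivity)]
    exact hbound y hy
  calc ∫ y in Ioi x, (y ^ 2 + 1) ^ (-(k + 1) / 2)
      ≤ ∫ y in Ioi x, 2 ^ ((k + 1) / 2) * (y + 1) ^ (-(k + 1)) :=
        setIntegral_mono_on hint hdom measurableSet_Ioi hbound
    _ = 2 ^ ((k + 1) / 2) * ((x + 1) ^ (-k) / k) := by
      rw [integral_const_mul, integral_Ioi_add_rpow_of_lt (by linarith) (by linarith)]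
      ring_nf

/-- The case `q = 1`, `β = 0` of Lemma C.1 (i): for `k > 0` and `x ≥ 0`,
`(x²+1)^{k/2} ∫_x^∞ (y²+1)^{-(k+1)/2} dy ≤ 2^{(k+1)/2}/k`. -/
theorem stmt_1 (k : ℝ) (hk : 0 < k) (x : ℝ) (hx : 0 ≤ x) :
    (x ^ 2 + 1) ^ (k / 2) * (∫ y in Set.Ioi x, (y ^ 2 + 1) ^ (-(k + 1) / 2))
      ≤ 2 ^ ((k + 1) / 2) / k := by
  have hx1 : 0 < x + 1 := by linarith
  have hweight : (x ^ 2 + 1) ^ (k / 2) ≤ (x + 1) ^ k := by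
    simpa [mul_div_cancel₀] using sq_add_one_rpow_le_add_one_rpow hx (by positivity : 0 ≤ k / 2)
  calc (x ^ 2 + 1) ^ (k / 2) * (∫ y in Set.Ioi x, (y ^ 2 + 1) ^ (-(k + 1) / 2))
      ≤ (x + 1) ^ k * (2 ^ ((k + 1) / 2) * ((x + 1) ^ (-k) / k)) :=
        mul_le_mul hweight (integral_Ioi_sq_add_one_rpow_le hk (by linarith))
          (setIntegral_nonneg measurableSet_Ioi fun y _ ↦ by positivity) (by positivity)
    _ = 2 ^ ((k + 1) / 2) / k := by
      rw [rpow_neg hx1.le]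
      field_simp
end

section
/- For every β₀ > 0 and every k > 1 there exists a constant C = C(β₀,k) > 0 such that for all 0 < β ≤ β₀ and all x ≥ 0 one has (x²+1)^{k/2} · ∫_0^x (y²+1)^{-k/2} e^{-β(x-y)} dy ≤ C β^{-k}. -/
/-!
With η(y) = (y² + 1)^{1/2}, Peetre's inequality η(x)^k ≤ 2^k (η(y)^k + |x - y|^k) splits
the integrand into two pieces. The first is e^{-β(x-y)}, whose integral over [0, x] is at most
1/β ≤ β₀^{k-1} β^{-k}. The second is (x - y)^k e^{-β(x-y)} η(y)^{-k} ≤ (k/β)^k η(y)^{-k}, and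
η^{-k} is integrable on ℝ because k > 1.
-/

open MeasureTheory Real Set

lemma rpow_mul_exp_neg_mul_le {k β t : ℝ} (hk : 0 < k) (hβ : 0 < β) (ht : 0 ≤ t) :
    t ^ k * exp (-(β * t)) ≤ (k / β) ^ k := by
  have hbase : t * exp (-(β / k * t)) ≤ k / β := by
    have h := mul_exp_neg_le_exp_neg_one (β / k * t)
    have h1 : exp (-1) ≤ 1 := exp_le_one_iff.mpr (by norm_num)
    calc t * exp (-(β / k * t)) = k / β * (β / k * t * exp (-(β / k * t))) := by
          field_simp
      _ ≤ k / β * 1 := by gcongr; exact h.trans h1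
      _ = k / β := mul_one _
  calc t ^ k * exp (-(β * t)) = (t * exp (-(β / k * t))) ^ k := by
        rw [mul_rpow ht (exp_pos _).le, ← exp_mul]
        congr 2
        field_simp
    _ ≤ (k / β) ^ k := by gcongr

lemma add_rpow_le_two_rpow_mul_rpow_add_rpow {a b p : ℝ} (ha : 0 ≤ a) (hb : 0 ≤ b)
    (hp : 0 ≤ p) :
    (a + b) ^ p ≤ 2 ^ p * (a ^ p + b ^ p) :=
  calc (a + b) ^ p ≤ (2 * max a b) ^ p := by
        gcongr
        linarith [le_max_left a b, le_max_right a b]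
    _ = 2 ^ p * max (a ^ p) (b ^ p) := by
        rw [mul_rpow zero_le_two (ha.trans (le_max_left a b)), rpow_max ha hb hp]
    _ ≤ 2 ^ p * (a ^ p + b ^ p) := by
        gcongr
        exact max_le_add_of_nonneg (by positivity) (by positivity)

lemma sqrt_sq_add_one_le_add_abs_sub (x y : ℝ) : √(x ^ 2 + 1) ≤ √(y ^ 2 + 1) + |x - y| := by
  have hy : |y| ≤ √(y ^ 2 + 1) := by
    rw [← sqrt_sq_eq_abs]; exact sqrt_le_sqrt (by linarith)
  have hsq : √(y ^ 2 + 1) ^ 2 = y ^ 2 + 1 := sq_sqrt (by positivity)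
  have hcross : y * (x - y) ≤ √(y ^ 2 + 1) * |x - y| :=
    calc y * (x - y) ≤ |y| * |x - y| := by rw [← abs_mul]; exact le_abs_self _
      _ ≤ √(y ^ 2 + 1) * |x - y| := by gcongr
  rw [sqrt_le_left (by positivity)]
  nlinarith [sq_abs (x - y)]

lemma sq_add_one_rpow_div_two_le {k : ℝ} (hk : 0 ≤ k) (x y : ℝ) :
    (x ^ 2 + 1) ^ (k / 2) ≤ 2 ^ k * ((y ^ 2 + 1) ^ (k / 2) + |x - y| ^ k) := by
  rw [rpow_div_two_eq_sqrt _ (by positivity), rpow_div_two_eq_sqrt _ (by positivity)]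
  calc √(x ^ 2 + 1) ^ k ≤ (√(y ^ 2 + 1) + |x - y|) ^ k := by
        gcongr; exact sqrt_sq_add_one_le_add_abs_sub x y
    _ ≤ _ := add_rpow_le_two_rpow_mul_rpow_add_rpow (sqrt_nonneg _) (abs_nonneg _) hk

lemma integrable_sq_add_one_rpow_neg {k : ℝ} (hk : 1 < k) :
    Integrable fun y : ℝ ↦ (y ^ 2 + 1) ^ (-k / 2) := by
  simpa [add_comm] using
    integrable_rpow_neg_one_add_norm_sq (E := ℝ) (μ := volume) (r := k) (by simpa using hk)

lemma integral_exp_neg_mul_sub_le {β x : ℝ} (hβ : 0 < β) (hx : 0 ≤ x) :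
    ∫ y in (0:ℝ)..x, exp (-β * (x - y)) ≤ 1 / β := by
  simp_rw [show ∀ y, -β * (x - y) = -(β * x) + β * y from fun y ↦ by ring, exp_add]
  have hint : IntegrableOn (fun y ↦ exp (-(β * x)) * exp (β * y)) (Iic x) :=
    (integrableOn_exp_mul_Iic hβ x).const_mul _
  calc ∫ y in (0:ℝ)..x, exp (-(β * x)) * exp (β * y)
        ≤ ∫ y in Iic x, exp (-(β * x)) * exp (β * y) := by
        rw [intervalIntegral.integral_of_le hx]
        exact setIntegral_mono_set hint (.of_forall fun y ↦ by positivity)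
          (.of_forall Ioc_subset_Iic_self)
    _ = 1 / β := by
        rw [integral_const_mul, integral_exp_mul_Iic hβ, ← mul_div_assoc, ← exp_add]
        simp

lemma intervalIntegral_sq_add_one_rpow_neg_le {k x : ℝ} (hk : 1 < k) (hx : 0 ≤ x) :
    ∫ y in (0:ℝ)..x, (y ^ 2 + 1) ^ (-k / 2) ≤ ∫ y : ℝ, (y ^ 2 + 1) ^ (-k / 2) := by
  rw [intervalIntegral.integral_of_le hx]
  exact setIntegral_le_integral (integrable_sq_add_one_rpow_neg hk)
    (.of_forall fun y ↦ by positivity)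

lemma sq_add_one_rpow_mul_exp_le {k β x y : ℝ} (hk : 0 < k) (hβ : 0 < β) (hyx : y ≤ x) :
    (x ^ 2 + 1) ^ (k / 2) * ((y ^ 2 + 1) ^ (-k / 2) * exp (-β * (x - y)))
      ≤ 2 ^ k * exp (-β * (x - y)) + 2 ^ k * (k / β) ^ k * (y ^ 2 + 1) ^ (-k / 2) := by
  have hcancel : (y ^ 2 + 1) ^ (k / 2) * (y ^ 2 + 1) ^ (-k / 2) = 1 := by
    rw [← rpow_add (by positivity), neg_div, add_neg_cancel, rpow_zero]
  have hpeetre := sq_add_one_rpow_div_two_le hk.le x y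
  rw [abs_of_nonneg (sub_nonneg.mpr hyx)] at hpeetre
  have hdecay : (x - y) ^ k * exp (-β * (x - y)) ≤ (k / β) ^ k := by
    rw [neg_mul]; exact rpow_mul_exp_neg_mul_le hk hβ (sub_nonneg.mpr hyx)
  calc (x ^ 2 + 1) ^ (k / 2) * ((y ^ 2 + 1) ^ (-k / 2) * exp (-β * (x - y)))
      ≤ 2 ^ k * ((y ^ 2 + 1) ^ (k / 2) + (x - y) ^ k)
          * ((y ^ 2 + 1) ^ (-k / 2) * exp (-β * (x - y))) := by gcongr
    _ = 2 ^ k * ((y ^ 2 + 1) ^ (k / 2) * (y ^ 2 + 1) ^ (-k / 2)) * exp (-β * (x - y))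
          + 2 ^ k * ((x - y) ^ k * exp (-β * (x - y))) * (y ^ 2 + 1) ^ (-k / 2) := by ring
    _ ≤ 2 ^ k * exp (-β * (x - y)) + 2 ^ k * (k / β) ^ k * (y ^ 2 + 1) ^ (-k / 2) := by
        rw [hcancel, mul_one]; gcongr

lemma sq_add_one_rpow_mul_integral_le {k β x : ℝ} (hk : 1 < k) (hβ : 0 < β) (hx : 0 ≤ x) :
    (x ^ 2 + 1) ^ (k / 2) * (∫ y in (0:ℝ)..x, (y ^ 2 + 1) ^ (-k / 2) * exp (-β * (x - y)))
      ≤ 2 ^ k * (1 / β) + 2 ^ k * (k / β) ^ k * ∫ y : ℝ, (y ^ 2 + 1) ^ (-k / 2) := by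
  have hweight : IntervalIntegrable (fun y : ℝ ↦ (y ^ 2 + 1) ^ (-k / 2)) volume 0 x :=
    (integrable_sq_add_one_rpow_neg hk).intervalIntegrable
  have hexp : IntervalIntegrable (fun y ↦ exp (-β * (x - y))) volume 0 x :=
    (by fun_prop : Continuous fun y ↦ exp (-β * (x - y))).intervalIntegrable _ _
  have hbound : IntervalIntegrable
      (fun y ↦ 2 ^ k * exp (-β * (x - y)) + 2 ^ k * (k / β) ^ k * (y ^ 2 + 1) ^ (-k / 2))
      volume 0 x :=
    (hexp.const_mul _).add (hweight.const_mul _)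
  rw [← intervalIntegral.integral_const_mul]
  calc ∫ y in (0:ℝ)..x, (x ^ 2 + 1) ^ (k / 2) * ((y ^ 2 + 1) ^ (-k / 2) * exp (-β * (x - y)))
      ≤ ∫ y in (0:ℝ)..x,
          2 ^ k * exp (-β * (x - y)) + 2 ^ k * (k / β) ^ k * (y ^ 2 + 1) ^ (-k / 2) :=
        intervalIntegral.integral_mono_on hx (((hweight.mul_continuousOn
          (by fun_prop)).const_mul _)) hbound fun y hy ↦
          sq_add_one_rpow_mul_exp_le (by linarith) hβ hy.2
    _ = 2 ^ k * (∫ y in (0:ℝ)..x, exp (-β * (x - y)))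
          + 2 ^ k * (k / β) ^ k * ∫ y in (0:ℝ)..x, (y ^ 2 + 1) ^ (-k / 2) := by
        rw [intervalIntegral.integral_add (hexp.const_mul _) (hweight.const_mul _),
          intervalIntegral.integral_const_mul, intervalIntegral.integral_const_mul]
    _ ≤ 2 ^ k * (1 / β) + 2 ^ k * (k / β) ^ k * ∫ y : ℝ, (y ^ 2 + 1) ^ (-k / 2) := by
        gcongr
        · exact integral_exp_neg_mul_sub_le hβ hx
        · exact intervalIntegral_sq_add_one_rpow_neg_le hk hx

lemma one_div_le_rpow_sub_one_mul_rpow_neg {β β₀ k : ℝ} (hβ : 0 < β) (hββ₀ : β ≤ β₀)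
    (hk : 1 ≤ k) :
    1 / β ≤ β₀ ^ (k - 1) * β ^ (-k) :=
  calc 1 / β = β ^ (k - 1) * β ^ (-k) := by
        rw [← rpow_add hβ, show k - 1 + -k = -1 by ring, rpow_neg_one, one_div]
    _ ≤ β₀ ^ (k - 1) * β ^ (-k) := by gcongr

/-- Lemma C.1 (iii), case `k > 1`: weighted exponential integral estimate on `[0, x]`. -/
theorem stmt_3 (β₀ k : ℝ) (hβ₀ : 0 < β₀) (hk : 1 < k) :
    ∃ C : ℝ, 0 < C ∧ ∀ β : ℝ, 0 < β → β ≤ β₀ → ∀ x : ℝ, 0 ≤ x →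
      (x ^ 2 + 1) ^ (k / 2) *
        (∫ y in (0:ℝ)..x, (y ^ 2 + 1) ^ (-k / 2) * Real.exp (-β * (x - y)))
      ≤ C * β ^ (-k) := by
  set M := ∫ y : ℝ, (y ^ 2 + 1) ^ (-k / 2)
  have hM : 0 ≤ M := integral_nonneg fun y ↦ by positivity
  refine ⟨2 ^ k * (β₀ ^ (k - 1) + k ^ k * M), by positivity, fun β hβ hββ₀ x hx ↦ ?_⟩
  calc (x ^ 2 + 1) ^ (k / 2) * (∫ y in (0:ℝ)..x, (y ^ 2 + 1) ^ (-k / 2) * exp (-β * (x - y)))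
      ≤ 2 ^ k * (1 / β) + 2 ^ k * (k / β) ^ k * M := sq_add_one_rpow_mul_integral_le hk hβ hx
    _ ≤ 2 ^ k * (β₀ ^ (k - 1) * β ^ (-k)) + 2 ^ k * (k ^ k * β ^ (-k)) * M := by
        rw [div_rpow (by linarith) hβ.le, div_eq_mul_inv (k ^ k), ← rpow_neg hβ.le]
        gcongr
        exact one_div_le_rpow_sub_one_mul_rpow_neg hβ hββ₀ hk.le
    _ = 2 ^ k * (β₀ ^ (k - 1) + k ^ k * M) * β ^ (-k) := by ring
end

section
/- For every β₀ > 0 there exists a constant C = C(β₀) > 0 such that for all 0 < β ≤ β₀ and all x ≥ 0 one has (x²+1)^{1/2} · ∫_0^x (y²+1)^{-1/2} e^{-β(x-y)} dy ≤ C (1 + |log β|) β^{-1}. -/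
open MeasureTheory

set_option maxHeartbeats 1000000
open intervalIntegral Real


lemma exp_int_le (β a b : ℝ) (hβ : 0 < β) : ∫ y in a..b, Real.exp (-β*(b-y)) ≤ β⁻¹ := by
  have h1 : ∀ y : ℝ, Real.exp (-β*(b-y)) = Real.exp (β*y) * Real.exp (-β*b) := by
    intro y; rw [← Real.exp_add]; ring_nf
  simp_rw [h1]
  rw [intervalIntegral.integral_mul_const,
    intervalIntegral.integral_comp_mul_left Real.exp (ne_of_gt hβ), integral_exp]
  rw [smul_eq_mul]
  have : β⁻¹ * (Real.exp (β*b) - Real.exp (β*a)) * Real.exp (-β*b)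
      = β⁻¹ * (1 - Real.exp (β*a) * Real.exp (-β*b)) := by
    rw [mul_assoc, sub_mul, ← Real.exp_add, show β*b + -β*b = 0 by ring, Real.exp_zero]
  rw [this]
  have h2 : 0 < Real.exp (β*a) * Real.exp (-β*b) := by positivity
  nlinarith [inv_pos.mpr hβ]

lemma log_int (c : ℝ) (hc : 0 ≤ c) : ∫ y in (0:ℝ)..c, (y+1)⁻¹ = Real.log (c+1) := by
  rw [show (∫ y in (0:ℝ)..c, (y+1)⁻¹) = ∫ y in (0:ℝ)..c, (fun t => t⁻¹) (y + 1) from rfl,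
    intervalIntegral.integral_comp_add_right (fun t : ℝ => t⁻¹) 1, zero_add,
    integral_inv, div_one]
  intro h
  rcases h with h
  simp only [Set.mem_uIcc] at h
  rcases h with ⟨h1,_⟩|⟨_,h2⟩ <;> linarith

lemma inv_le_helper {a b c : ℝ} (ha : 0 < a) (hb : 0 < b) (h : a ≤ c * b) : b⁻¹ ≤ c * a⁻¹ := by
  rw [← one_div, ← div_eq_mul_inv, div_le_div_iff₀ hb ha]; linarith

lemma rpow_half_sq {a : ℝ} (ha : 0 ≤ a) : ((a^2 : ℝ)) ^ ((1:ℝ)/2) = a := by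
  rw [← Real.rpow_natCast a 2, ← Real.rpow_mul ha]
  norm_num

-- scalar estimate 1
lemma scalar1 {β β₀ x : ℝ} (hβ : 0 < β) (hββ₀ : β ≤ β₀) (hx : 0 ≤ x) :
    (x+1) * Real.exp (-(β*x)/4) ≤ (β₀+4) * β⁻¹ := by
  have hE := Real.add_one_le_exp (β*x/4)
  have hEpos := Real.exp_pos (β*x/4)
  have h1 : Real.exp (-(β*x)/4) = (Real.exp (β*x/4))⁻¹ := by
    rw [← Real.exp_neg]; ring_nf
  rw [h1]
  have key : (x+1) * β ≤ (β₀+4) * Real.exp (β*x/4) := by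
    nlinarith [mul_le_mul_of_nonneg_left hE (by linarith : (0:ℝ) ≤ β₀+4),
      mul_nonneg (mul_nonneg (by linarith : (0:ℝ) ≤ β₀) hβ.le) hx]
  rw [← div_eq_mul_inv, ← div_eq_mul_inv, div_le_div_iff₀ hEpos hβ]
  linarith [key]

-- scalar estimate 2
lemma scalar2 {β x : ℝ} (hβ : 0 < β) (hx : 0 ≤ x) :
    Real.exp (-(β*x)/4) * Real.log (x/2+1) ≤ Real.log (1+4/β) + 1 := by
  have h4β : (0:ℝ) < 1 + 4/β := by positivity
  have hE := Real.add_one_le_exp (β*x/4)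
  have hEpos := Real.exp_pos (β*x/4)
  have h1 : Real.exp (-(β*x)/4) = (Real.exp (β*x/4))⁻¹ := by
    rw [← Real.exp_neg]; ring_nf
  have hlogB : 0 ≤ Real.log (1+4/β) := Real.log_nonneg (by nlinarith [div_pos (by norm_num : (0:ℝ)<4) hβ])
  have hlog : Real.log (x/2+1) ≤ Real.log (1+4/β) + β*x/8 := by
    have hprod : x/2+1 ≤ (1+4/β) * (1+β*x/8) := by
      have h2 : 4/β * (β*x/8) = x/2 := by field_simp; ring
      nlinarith [h2, mul_nonneg hβ.le hx, le_of_lt (div_pos (by norm_num : (0:ℝ)<4) hβ)]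
    calc Real.log (x/2+1) ≤ Real.log ((1+4/β) * (1+β*x/8)) :=
          Real.log_le_log (by positivity) hprod
      _ = Real.log (1+4/β) + Real.log (1+β*x/8) :=
          Real.log_mul (ne_of_gt h4β) (by positivity)
      _ ≤ Real.log (1+4/β) + β*x/8 := by
          have := Real.log_le_sub_one_of_pos (show (0:ℝ) < 1+β*x/8 by positivity)
          linarith
  have hexple : Real.exp (-(β*x)/4) ≤ 1 := by
    rw [Real.exp_le_one_iff]; nlinarith [mul_nonneg hβ.le hx]
  have hlognn : 0 ≤ Real.log (x/2+1) := Real.log_nonneg (by linarith)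
  have hstep : Real.exp (-(β*x)/4) * Real.log (x/2+1)
      ≤ Real.log (1+4/β) + (β*x/8) * Real.exp (-(β*x)/4) := by
    have := mul_le_mul_of_nonneg_left hlog (Real.exp_pos (-(β*x)/4)).le
    nlinarith [mul_le_mul_of_nonneg_right hexple hlogB]
  have hlast : (β*x/8) * Real.exp (-(β*x)/4) ≤ 1 := by
    rw [h1]
    have h8 : β*x/8 ≤ Real.exp (β*x/4) := by nlinarith [mul_nonneg hβ.le hx]
    calc (β*x/8) * (Real.exp (β*x/4))⁻¹ ≤ Real.exp (β*x/4) * (Real.exp (β*x/4))⁻¹ :=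
          mul_le_mul_of_nonneg_right h8 (by positivity)
      _ = 1 := mul_inv_cancel₀ (ne_of_gt hEpos)
  linarith

-- scalar estimate 3
lemma scalar3 {β : ℝ} (hβ : 0 < β) : Real.log (1+4/β) ≤ 4 + |Real.log β| := by
  have hlog5 : Real.log 5 ≤ 4 := by
    have := Real.log_le_sub_one_of_pos (show (0:ℝ) < 5 by norm_num); linarith
  rcases le_or_gt β 1 with h | h
  · have h5β : 1 + 4/β ≤ 5 * β⁻¹ := by
      rw [div_eq_mul_inv]
      have : (1:ℝ) ≤ β⁻¹ := by
        rw [le_inv_comm₀ one_pos hβ]; simpa using h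
      nlinarith
    have habs : |Real.log β| = - Real.log β := abs_of_nonpos (Real.log_nonpos hβ.le h)
    calc Real.log (1+4/β) ≤ Real.log (5 * β⁻¹) := Real.log_le_log (by positivity) h5β
      _ = Real.log 5 + Real.log β⁻¹ := Real.log_mul (by norm_num) (by positivity)
      _ = Real.log 5 - Real.log β := by rw [Real.log_inv]; ring
      _ ≤ 4 + |Real.log β| := by rw [habs] at *; linarith
  · have h5 : 1 + 4/β ≤ 5 := by
      have : 4/β ≤ 4 := by rw [div_le_iff₀ hβ]; nlinarith
      linarith
    calc Real.log (1+4/β) ≤ Real.log 5 := Real.log_le_log (by positivity) h5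
      _ ≤ 4 + |Real.log β| := by have := abs_nonneg (Real.log β); linarith

/-- Lemma C.1 (iii), case `k = 1`: logarithmically corrected estimate. -/
theorem stmt_4 (β₀ : ℝ) (hβ₀ : 0 < β₀) :
    ∃ C : ℝ, 0 < C ∧ ∀ β : ℝ, 0 < β → β ≤ β₀ → ∀ x : ℝ, 0 ≤ x →
      (x ^ 2 + 1) ^ ((1:ℝ) / 2) *
        (∫ y in (0:ℝ)..x, (y ^ 2 + 1) ^ (-(1:ℝ) / 2) * Real.exp (-β * (x - y)))
      ≤ C * (1 + |Real.log β|) * β⁻¹ := by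
  refine ⟨8*β₀ + 34, by linarith, ?_⟩
  intro β hβ hββ₀ x hx
  have hx2 : (0:ℝ) ≤ x/2 := by linarith
  have hβinv : (0:ℝ) < β⁻¹ := inv_pos.mpr hβ
  set A : ℝ := (x^2+1) ^ ((1:ℝ)/2) with hAdef
  have hA : 0 < A := Real.rpow_pos_of_pos (by positivity) _
  have hneg : ∀ y : ℝ, ((y:ℝ)^2+1) ^ (-(1:ℝ)/2) = (((y:ℝ)^2+1) ^ ((1:ℝ)/2))⁻¹ := by
    intro y
    rw [show (-(1:ℝ)/2) = -((1:ℝ)/2) by norm_num, Real.rpow_neg (by positivity)]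
  have hcont : Continuous fun y : ℝ => ((y:ℝ)^2+1) ^ (-(1:ℝ)/2) * Real.exp (-β*(x-y)) := by
    apply Continuous.mul
    · exact Continuous.rpow_const (by continuity) (fun y => Or.inl (by positivity))
    · exact Real.continuous_exp.comp (by continuity)
  have hi1 : IntervalIntegrable (fun y : ℝ => ((y:ℝ)^2+1) ^ (-(1:ℝ)/2) * Real.exp (-β*(x-y)))
      volume 0 (x/2) := hcont.intervalIntegrable _ _
  have hi2 : IntervalIntegrable (fun y : ℝ => ((y:ℝ)^2+1) ^ (-(1:ℝ)/2) * Real.exp (-β*(x-y)))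
      volume (x/2) x := hcont.intervalIntegrable _ _
  have hsplit : (∫ y in (0:ℝ)..x, ((y:ℝ)^2+1) ^ (-(1:ℝ)/2) * Real.exp (-β*(x-y)))
      = (∫ y in (0:ℝ)..(x/2), ((y:ℝ)^2+1) ^ (-(1:ℝ)/2) * Real.exp (-β*(x-y)))
      + ∫ y in (x/2)..x, ((y:ℝ)^2+1) ^ (-(1:ℝ)/2) * Real.exp (-β*(x-y)) :=
    (integral_add_adjacent_intervals hi1 hi2).symm
  -- piece 2
  have h4 : ((4:ℝ)) ^ ((1:ℝ)/2) = 2 := by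
    rw [show (4:ℝ) = 2^2 by norm_num]; exact rpow_half_sq (by norm_num)
  have hb2 : ∀ y ∈ Set.Icc (x/2) x,
      ((y:ℝ)^2+1) ^ (-(1:ℝ)/2) * Real.exp (-β*(x-y)) ≤ (2*A⁻¹) * Real.exp (-β*(x-y)) := by
    intro y hy
    obtain ⟨hy1, hy2⟩ := hy
    have hB : (0:ℝ) < (y^2+1) ^ ((1:ℝ)/2) := Real.rpow_pos_of_pos (by positivity) _
    have hkey : A ≤ 2 * (y^2+1) ^ ((1:ℝ)/2) := by
      have hy0 : 0 ≤ y := le_trans hx2 hy1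
      have h1 : (x^2+1 : ℝ) ≤ 4*(y^2+1) := by nlinarith
      calc A ≤ (4*(y^2+1)) ^ ((1:ℝ)/2) :=
            Real.rpow_le_rpow (by positivity) h1 (by norm_num)
        _ = (4:ℝ) ^ ((1:ℝ)/2) * (y^2+1) ^ ((1:ℝ)/2) :=
            Real.mul_rpow (by norm_num) (by positivity)
        _ = 2 * (y^2+1) ^ ((1:ℝ)/2) := by rw [h4]
    rw [hneg y]
    exact mul_le_mul_of_nonneg_right (inv_le_helper hA hB hkey) (Real.exp_pos _).le
  have hI2 : (∫ y in (x/2)..x, ((y:ℝ)^2+1) ^ (-(1:ℝ)/2) * Real.exp (-β*(x-y)))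
      ≤ (2*A⁻¹) * β⁻¹ := by
    calc (∫ y in (x/2)..x, ((y:ℝ)^2+1) ^ (-(1:ℝ)/2) * Real.exp (-β*(x-y)))
        ≤ ∫ y in (x/2)..x, (2*A⁻¹) * Real.exp (-β*(x-y)) := by
          apply integral_mono_on (by linarith) hi2
          · exact (continuous_const.mul (Real.continuous_exp.comp (by continuity))).intervalIntegrable _ _
          · exact hb2
      _ = (2*A⁻¹) * ∫ y in (x/2)..x, Real.exp (-β*(x-y)) := integral_const_mul _ _
      _ ≤ (2*A⁻¹) * β⁻¹ :=
          mul_le_mul_of_nonneg_left (exp_int_le β (x/2) x hβ) (by positivity)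
  -- piece 1
  set c2 : ℝ := (2:ℝ) ^ ((1:ℝ)/2) with hc2def
  have hc2pos : 0 < c2 := Real.rpow_pos_of_pos two_pos _
  have hc2sq : c2^2 = 2 := by
    rw [hc2def, ← Real.rpow_natCast ((2:ℝ) ^ ((1:ℝ)/2)) 2, ← Real.rpow_mul (by norm_num : (0:ℝ) ≤ 2)]
    norm_num
  have hc2le : c2 ≤ 3/2 := by nlinarith
  have hb1 : ∀ y ∈ Set.Icc (0:ℝ) (x/2),
      ((y:ℝ)^2+1) ^ (-(1:ℝ)/2) * Real.exp (-β*(x-y))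
      ≤ (c2 * Real.exp (-(β*x)/2)) * (y+1)⁻¹ := by
    intro y hy
    obtain ⟨hy1, hy2⟩ := hy
    have hB : (0:ℝ) < (y^2+1) ^ ((1:ℝ)/2) := Real.rpow_pos_of_pos (by positivity) _
    have hy1' : (0:ℝ) < y + 1 := by linarith
    have hkey : y + 1 ≤ c2 * (y^2+1) ^ ((1:ℝ)/2) := by
      calc y + 1 = ((y+1)^2) ^ ((1:ℝ)/2) := (rpow_half_sq (by linarith)).symm
        _ ≤ (2*(y^2+1)) ^ ((1:ℝ)/2) :=
            Real.rpow_le_rpow (by positivity) (by nlinarith [sq_nonneg (y-1)]) (by norm_num)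
        _ = c2 * (y^2+1) ^ ((1:ℝ)/2) := Real.mul_rpow (by norm_num) (by positivity)
    have hexp : Real.exp (-β*(x-y)) ≤ Real.exp (-(β*x)/2) := by
      apply Real.exp_le_exp.mpr
      nlinarith [mul_le_mul_of_nonneg_left hy2 hβ.le]
    rw [hneg y]
    calc ((y^2+1 : ℝ) ^ ((1:ℝ)/2))⁻¹ * Real.exp (-β*(x-y))
        ≤ (c2 * (y+1)⁻¹) * Real.exp (-(β*x)/2) := by
          apply mul_le_mul (inv_le_helper hy1' hB hkey) hexp (Real.exp_pos _).le
          positivity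
      _ = (c2 * Real.exp (-(β*x)/2)) * (y+1)⁻¹ := by ring
  have hI1 : (∫ y in (0:ℝ)..(x/2), ((y:ℝ)^2+1) ^ (-(1:ℝ)/2) * Real.exp (-β*(x-y)))
      ≤ (c2 * Real.exp (-(β*x)/2)) * Real.log (x/2+1) := by
    calc (∫ y in (0:ℝ)..(x/2), ((y:ℝ)^2+1) ^ (-(1:ℝ)/2) * Real.exp (-β*(x-y)))
        ≤ ∫ y in (0:ℝ)..(x/2), (c2 * Real.exp (-(β*x)/2)) * (y+1)⁻¹ := by
          apply integral_mono_on hx2 hi1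
          · apply ContinuousOn.intervalIntegrable
            apply ContinuousOn.mul continuousOn_const
            apply ContinuousOn.inv₀ (by fun_prop)
            intro y hy
            rw [Set.uIcc_of_le hx2] at hy
            have := hy.1
            positivity
          · exact hb1
      _ = (c2 * Real.exp (-(β*x)/2)) * ∫ y in (0:ℝ)..(x/2), (y+1)⁻¹ := integral_const_mul _ _
      _ = (c2 * Real.exp (-(β*x)/2)) * Real.log (x/2+1) := by rw [log_int (x/2) hx2]
  -- combine
  have hηle : A ≤ x + 1 := by
    calc A ≤ ((x+1)^2) ^ ((1:ℝ)/2) :=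
          Real.rpow_le_rpow (by positivity) (by nlinarith) (by norm_num)
      _ = x + 1 := rpow_half_sq (by linarith)
  have hE2 : Real.exp (-(β*x)/2) = Real.exp (-(β*x)/4) * Real.exp (-(β*x)/4) := by
    rw [← Real.exp_add]; ring_nf
  have hLnn : 0 ≤ Real.log (x/2+1) := Real.log_nonneg (by linarith)
  have hterm1 : A * ((c2 * Real.exp (-(β*x)/2)) * Real.log (x/2+1))
      ≤ (3/2) * ((β₀+4) * β⁻¹) * (5 + |Real.log β|) := by
    have h1 : A * ((c2 * Real.exp (-(β*x)/2)) * Real.log (x/2+1))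
        = c2 * ((x+1) * Real.exp (-(β*x)/4)) * (Real.exp (-(β*x)/4) * Real.log (x/2+1))
          - (x+1-A) * ((c2 * Real.exp (-(β*x)/2)) * Real.log (x/2+1)) := by
      rw [hE2]; ring
    rw [h1]
    have hs1 := scalar1 hβ hββ₀ hx
    have hs2 := scalar2 hβ hx
    have hs3 := scalar3 hβ
    have hnn1 : 0 ≤ (x+1) * Real.exp (-(β*x)/4) := by positivity
    have hnn2 : 0 ≤ Real.exp (-(β*x)/4) * Real.log (x/2+1) := by positivity
    have hnn3 : (0:ℝ) ≤ (β₀+4) * β⁻¹ := by positivity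
    have hsub : 0 ≤ (x+1-A) * ((c2 * Real.exp (-(β*x)/2)) * Real.log (x/2+1)) := by
      apply mul_nonneg (by linarith)
      positivity
    have hmain : c2 * ((x+1) * Real.exp (-(β*x)/4)) * (Real.exp (-(β*x)/4) * Real.log (x/2+1))
        ≤ (3/2) * ((β₀+4) * β⁻¹) * (5 + |Real.log β|) := by
      apply mul_le_mul
      · apply mul_le_mul hc2le hs1 hnn1 (by norm_num)
      · linarith
      · exact hnn2
      · positivity
    linarith
  have hterm2 : A * ((2*A⁻¹) * β⁻¹) = 2 * β⁻¹ := by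
    field_simp
  rw [hsplit, mul_add]
  have hfinal1 : A * (∫ y in (0:ℝ)..(x/2), ((y:ℝ)^2+1) ^ (-(1:ℝ)/2) * Real.exp (-β*(x-y)))
      ≤ (3/2) * ((β₀+4) * β⁻¹) * (5 + |Real.log β|) :=
    le_trans (mul_le_mul_of_nonneg_left hI1 hA.le) hterm1
  have hfinal2 : A * (∫ y in (x/2)..x, ((y:ℝ)^2+1) ^ (-(1:ℝ)/2) * Real.exp (-β*(x-y)))
      ≤ 2 * β⁻¹ := by
    calc A * (∫ y in (x/2)..x, ((y:ℝ)^2+1) ^ (-(1:ℝ)/2) * Real.exp (-β*(x-y)))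
        ≤ A * ((2*A⁻¹) * β⁻¹) := mul_le_mul_of_nonneg_left hI2 hA.le
      _ = 2 * β⁻¹ := hterm2
  have habs : 0 ≤ |Real.log β| := abs_nonneg _
  have hs : (3/2) * (β₀+4) * (5 + |Real.log β|) + 2 ≤ (8*β₀ + 34) * (1 + |Real.log β|) := by
    nlinarith
  nlinarith [mul_le_mul_of_nonneg_right hs hβinv.le]
end

section
/- (Gronwall lemma with algebraic kernels) Suppose p > 1, C₁ ≥ 1 and C₂, ε > 0 satisfy ε ≤ 1/(9 C₁ C₂ C₃), where C₃ := 2^{p-1} p/(p-1). Let T > 0 and let φ : [0,T) → [0,∞) be continuous and satisfy φ(t) ≤ C₁ ε (1+t)^{-p} + C₂ ∫_0^t (ε + φ(s)) φ(s) (1+t-s)^{-p} ds for all t ∈ [0,T). Then φ(t) ≤ 3 C₁ ε (1+t)^{-(p-1)} for all t ∈ [0,T). -/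
/-!
Continuity argument. If the bound `φ ≤ 3 C₁ ε (1 + ·)^{-(p-1)}` failed, there would be a first
time `u` where `φ` reaches it. Below `u` the bound gives
`(ε + φ s) φ s ≤ 12 C₁² ε² (1 + s)^{-(p-1)}`, and the convolution estimate
`∫₀ᵘ (1 + s)^{-(p-1)} (1 + u - s)^{-p} ds ≤ C₃ (1 + u)^{-(p-1)}` (split the integral at `u / 2`:
on the first half the kernel is at most `(1 + u/2)^{-p}`, on the second half the weight is at most
`2^{p-1} (1 + u)^{-(p-1)}`) together with the smallness of `ε` turns the integral inequality at `u`
into `φ u ≤ 7/3 C₁ ε (1 + u)^{-(p-1)}`, contradicting the choice of `u`.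
-/

open MeasureTheory intervalIntegral Set

lemma continuousOn_one_add_rpow (r : ℝ) : ContinuousOn (fun s : ℝ => (1 + s) ^ r) (Ici 0) :=
  (continuousOn_const.add continuousOn_id).rpow_const fun s hs => Or.inl (by
    simp only [mem_Ici] at hs; simp only [Pi.add_apply, id]; positivity)

lemma continuousOn_one_add_sub_rpow (u r : ℝ) :
    ContinuousOn (fun s : ℝ => (1 + u - s) ^ r) (Iic u) :=
  (continuousOn_const.sub continuousOn_id).rpow_const fun s hs => Or.inl (by
    simp only [mem_Iic] at hs; simp only [Pi.sub_apply, id]; linarith)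

lemma one_add_half_rpow_neg_le {q u : ℝ} (hq : 0 ≤ q) (hu : 0 ≤ u) :
    (1 + u / 2) ^ (-q) ≤ 2 ^ q * (1 + u) ^ (-q) := by
  calc (1 + u / 2) ^ (-q) ≤ ((1 + u) / 2) ^ (-q) :=
        Real.rpow_le_rpow_of_nonpos (by positivity) (by linarith) (by linarith)
    _ = 2 ^ q * (1 + u) ^ (-q) := by
        rw [Real.div_rpow (by positivity) zero_le_two, Real.rpow_neg zero_le_two, div_inv_eq_mul,
          mul_comm]

lemma integral_one_add_rpow_neg_le {p v : ℝ} (hp : 1 < p) (hv : 0 ≤ v) :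
    ∫ y in (0 : ℝ)..v, (1 + y) ^ (-p) ≤ 1 / (p - 1) := by
  have hsub : (∫ y in (0 : ℝ)..v, (1 + y) ^ (-p)) = ∫ y in (1 : ℝ)..1 + v, y ^ (-p) := by
    simpa using integral_comp_add_left (fun y : ℝ => y ^ (-p)) (1 : ℝ) (a := 0) (b := v)
  have h0 : (0 : ℝ) ∉ uIcc 1 (1 + v) := by
    rw [uIcc_of_le (by linarith)]; exact fun h => absurd h.1 (by norm_num)
  rw [hsub, integral_rpow (Or.inr ⟨by linarith, h0⟩), Real.one_rpow,
    show -p + 1 = -(p - 1) by ring, div_neg, ← neg_div, neg_sub]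
  gcongr
  linarith [Real.rpow_nonneg (by linarith : (0 : ℝ) ≤ 1 + v) (-(p - 1))]

lemma intervalIntegrable_rpow_mul_rpow {a b u : ℝ} (r q : ℝ) (ha : 0 ≤ a)
    (hab : a ≤ b) (hbu : b ≤ u) :
    IntervalIntegrable (fun s : ℝ => (1 + s) ^ r * (1 + u - s) ^ q) volume a b :=
  (((continuousOn_one_add_rpow r).mono fun _ hs => le_trans ha hs.1).mul
    ((continuousOn_one_add_sub_rpow u q).mono fun _ hs => le_trans hs.2 hbu))
    |>.intervalIntegrable_of_Icc hab

lemma integral_zero_half_rpow_mul_rpow_le {p u : ℝ} (hp : 1 < p) (hu : 0 ≤ u) :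
    ∫ s in (0 : ℝ)..u / 2, (1 + s) ^ (-(p - 1)) * (1 + u - s) ^ (-p)
      ≤ 2 ^ (p - 1) * (1 + u) ^ (-(p - 1)) := by
  have hpoint : ∀ s ∈ Icc 0 (u / 2),
      (1 + s) ^ (-(p - 1)) * (1 + u - s) ^ (-p) ≤ (1 + u / 2) ^ (-p) := fun s hs =>
    (mul_le_of_le_one_left (Real.rpow_nonneg (by linarith [hs.2]) _)
      (Real.rpow_le_one_of_one_le_of_nonpos (by linarith [hs.1]) (by linarith))).trans
      (Real.rpow_le_rpow_of_nonpos (by positivity) (by linarith [hs.2]) (by linarith))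
  calc ∫ s in (0 : ℝ)..u / 2, (1 + s) ^ (-(p - 1)) * (1 + u - s) ^ (-p)
      ≤ ∫ _ in (0 : ℝ)..u / 2, (1 + u / 2) ^ (-p) :=
        integral_mono_on (by positivity)
          (intervalIntegrable_rpow_mul_rpow _ _ le_rfl (by positivity) (by linarith))
          intervalIntegrable_const hpoint
    _ = u / 2 * (1 + u / 2) ^ (-p) := by simp
    _ ≤ (1 + u / 2) * (1 + u / 2) ^ (-p) := by gcongr; linarith
    _ = (1 + u / 2) ^ (-(p - 1)) := by
        rw [show -(p - 1) = -p + 1 by ring, Real.rpow_add_one (by positivity), mul_comm]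
    _ ≤ 2 ^ (p - 1) * (1 + u) ^ (-(p - 1)) := one_add_half_rpow_neg_le (by linarith) hu

lemma integral_half_self_rpow_mul_rpow_le {p u : ℝ} (hp : 1 < p) (hu : 0 ≤ u) :
    ∫ s in u / 2..u, (1 + s) ^ (-(p - 1)) * (1 + u - s) ^ (-p)
      ≤ 2 ^ (p - 1) * (1 + u) ^ (-(p - 1)) * (1 / (p - 1)) := by
  set A := 2 ^ (p - 1) * (1 + u) ^ (-(p - 1))
  have hpoint : ∀ s ∈ Icc (u / 2) u,
      (1 + s) ^ (-(p - 1)) * (1 + u - s) ^ (-p) ≤ A * (1 + u - s) ^ (-p) := fun s hs =>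
    mul_le_mul_of_nonneg_right
      ((Real.rpow_le_rpow_of_nonpos (by positivity) (by linarith [hs.1]) (by linarith)).trans
        (one_add_half_rpow_neg_le (by linarith) hu))
      (Real.rpow_nonneg (by linarith [hs.2]) _)
  have hreflect : ∫ s in u / 2..u, (1 + u - s) ^ (-p) = ∫ y in (0 : ℝ)..u / 2, (1 + y) ^ (-p) := by
    simpa [add_sub_assoc, sub_half] using integral_comp_sub_left (fun y : ℝ => (1 + y) ^ (-p)) u
      (a := u / 2) (b := u)
  calc ∫ s in u / 2..u, (1 + s) ^ (-(p - 1)) * (1 + u - s) ^ (-p)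
      ≤ ∫ s in u / 2..u, A * (1 + u - s) ^ (-p) :=
        integral_mono_on (by linarith)
          (intervalIntegrable_rpow_mul_rpow _ _ (by positivity) (by linarith) le_rfl)
          (((continuousOn_one_add_sub_rpow u _).mono fun _ hs => hs.2).const_smul A
            |>.intervalIntegrable_of_Icc (by linarith))
          hpoint
    _ = A * ∫ y in (0 : ℝ)..u / 2, (1 + y) ^ (-p) := by
        rw [intervalIntegral.integral_const_mul, hreflect]
    _ ≤ A * (1 / (p - 1)) := by
        gcongr
        exact integral_one_add_rpow_neg_le hp (by positivity)

lemma integral_rpow_mul_rpow_le {p u : ℝ} (hp : 1 < p) (hu : 0 ≤ u) :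
    ∫ s in (0 : ℝ)..u, (1 + s) ^ (-(p - 1)) * (1 + u - s) ^ (-p)
      ≤ 2 ^ (p - 1) * p / (p - 1) * (1 + u) ^ (-(p - 1)) := by
  rw [← integral_add_adjacent_intervals (b := u / 2)
    (intervalIntegrable_rpow_mul_rpow _ _ le_rfl (by positivity) (by linarith))
    (intervalIntegrable_rpow_mul_rpow _ _ (by positivity) (by linarith) le_rfl)]
  refine (add_le_add (integral_zero_half_rpow_mul_rpow_le hp hu)
    (integral_half_self_rpow_mul_rpow_le hp hu)).trans_eq ?_
  have : p - 1 ≠ 0 := by linarith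
  field_simp
  ring

lemma exists_isLeast_le_of_continuousOn {f g : ℝ → ℝ} {a t : ℝ} (hf : ContinuousOn f (Icc a t))
    (hg : ContinuousOn g (Icc a t)) (hat : a ≤ t) (h : g t ≤ f t) :
    ∃ u, IsLeast {s ∈ Icc a t | g s ≤ f s} u :=
  ⟨_, (isClosed_Icc.isClosed_le hg hf).isLeast_csInf ⟨t, ⟨hat, le_rfl⟩, h⟩ ⟨a, fun _ hs => hs.1.1⟩⟩

section Bootstrap

variable {p C₁ C₂ ε u : ℝ} {φ : ℝ → ℝ}

lemma integral_quadratic_mul_kernel_le (hp : 1 < p) (hC₁ : 1 ≤ C₁) (hε : 0 ≤ ε) (hu : 0 ≤ u)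
    (hcont : ContinuousOn φ (Icc 0 u)) (hnonneg : ∀ s ∈ Ioo 0 u, 0 ≤ φ s)
    (hbound : ∀ s ∈ Ioo 0 u, φ s ≤ 3 * C₁ * ε * (1 + s) ^ (-(p - 1))) :
    ∫ s in (0 : ℝ)..u, (ε + φ s) * φ s * (1 + u - s) ^ (-p)
      ≤ 12 * C₁ ^ 2 * ε ^ 2 * (2 ^ (p - 1) * p / (p - 1) * (1 + u) ^ (-(p - 1))) := by
  have hpoint : ∀ s ∈ Ioo 0 u, (ε + φ s) * φ s * (1 + u - s) ^ (-p)
      ≤ 12 * C₁ ^ 2 * ε ^ 2 * ((1 + s) ^ (-(p - 1)) * (1 + u - s) ^ (-p)) := by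
    intro s hs
    have hb0 : 0 ≤ (1 + s) ^ (-(p - 1)) := Real.rpow_nonneg (by linarith [hs.1]) _
    have hb1 : (1 + s) ^ (-(p - 1)) ≤ 1 :=
      Real.rpow_le_one_of_one_le_of_nonpos (by linarith [hs.1]) (by linarith)
    have hφ0 := hnonneg s hs
    have hφ := hbound s hs
    have hsum : ε + φ s ≤ 4 * C₁ * ε := by nlinarith
    have hquad : (ε + φ s) * φ s ≤ 12 * C₁ ^ 2 * ε ^ 2 * (1 + s) ^ (-(p - 1)) := by
      nlinarith [mul_le_mul hsum hφ hφ0 (by positivity)]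
    calc (ε + φ s) * φ s * (1 + u - s) ^ (-p)
        ≤ 12 * C₁ ^ 2 * ε ^ 2 * (1 + s) ^ (-(p - 1)) * (1 + u - s) ^ (-p) :=
          mul_le_mul_of_nonneg_right hquad (Real.rpow_nonneg (by linarith [hs.2]) _)
      _ = 12 * C₁ ^ 2 * ε ^ 2 * ((1 + s) ^ (-(p - 1)) * (1 + u - s) ^ (-p)) := by ring
  have hkernel : ContinuousOn (fun s => (1 + u - s) ^ (-p)) (Icc 0 u) :=
    (continuousOn_one_add_sub_rpow u _).mono fun _ hs => hs.2
  calc ∫ s in (0 : ℝ)..u, (ε + φ s) * φ s * (1 + u - s) ^ (-p)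
      ≤ ∫ s in (0 : ℝ)..u, 12 * C₁ ^ 2 * ε ^ 2 * ((1 + s) ^ (-(p - 1)) * (1 + u - s) ^ (-p)) :=
        integral_mono_on_of_le_Ioo hu
          (((continuousOn_const.add hcont).mul hcont).mul hkernel |>.intervalIntegrable_of_Icc hu)
          ((intervalIntegrable_rpow_mul_rpow _ _ le_rfl hu le_rfl).const_mul _)
          hpoint
    _ ≤ 12 * C₁ ^ 2 * ε ^ 2 * (2 ^ (p - 1) * p / (p - 1) * (1 + u) ^ (-(p - 1))) := by
        rw [intervalIntegral.integral_const_mul]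
        gcongr
        exact integral_rpow_mul_rpow_le hp hu

lemma gronwall_bootstrap (hp : 1 < p) (hC₁ : 1 ≤ C₁) (hC₂ : 0 ≤ C₂) (hε : 0 ≤ ε)
    (hεle : ε * (9 * C₁ * C₂ * (2 ^ (p - 1) * p / (p - 1))) ≤ 1) (hu : 0 ≤ u)
    (hcont : ContinuousOn φ (Icc 0 u)) (hnonneg : ∀ s ∈ Ioo 0 u, 0 ≤ φ s)
    (hbound : ∀ s ∈ Ioo 0 u, φ s ≤ 3 * C₁ * ε * (1 + s) ^ (-(p - 1)))
    (hineq : φ u ≤ C₁ * ε * (1 + u) ^ (-p) +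
        C₂ * ∫ s in (0 : ℝ)..u, (ε + φ s) * φ s * (1 + u - s) ^ (-p)) :
    φ u ≤ 7 / 3 * C₁ * ε * (1 + u) ^ (-(p - 1)) := by
  set C₃ := 2 ^ (p - 1) * p / (p - 1)
  set A := (1 + u) ^ (-(p - 1))
  have hA : 0 ≤ A := by positivity
  calc φ u ≤ C₁ * ε * (1 + u) ^ (-p) +
        C₂ * ∫ s in (0 : ℝ)..u, (ε + φ s) * φ s * (1 + u - s) ^ (-p) := hineq
    _ ≤ C₁ * ε * A + C₂ * (12 * C₁ ^ 2 * ε ^ 2 * (C₃ * A)) := by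
        gcongr
        · exact Real.rpow_le_rpow_of_exponent_le (by linarith) (by linarith)
        · exact integral_quadratic_mul_kernel_le hp hC₁ hε hu hcont hnonneg hbound
    _ = C₁ * ε * A + 4 / 3 * (C₁ * ε) * (ε * (9 * C₁ * C₂ * C₃)) * A := by ring
    _ ≤ C₁ * ε * A + 4 / 3 * (C₁ * ε) * 1 * A := by gcongr
    _ = 7 / 3 * C₁ * ε * A := by ring

end Bootstrap

theorem stmt_5_general (p C₁ C₂ ε T : ℝ) (hp : 1 < p) (hC₁ : 1 ≤ C₁) (hC₂ : 0 < C₂)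
    (hε : 0 < ε)
    (hεle : ε ≤ 1 / (9 * C₁ * C₂ * (2 ^ (p - 1) * p / (p - 1))))
    (φ : ℝ → ℝ)
    (hcont : ContinuousOn φ (Set.Ico 0 T))
    (hnonneg : ∀ t ∈ Set.Ico (0:ℝ) T, 0 ≤ φ t)
    (hineq : ∀ t ∈ Set.Ico (0:ℝ) T,
      φ t ≤ C₁ * ε * (1 + t) ^ (-p) +
        C₂ * ∫ s in (0:ℝ)..t, (ε + φ s) * φ s * (1 + t - s) ^ (-p)) :
    ∀ t ∈ Set.Ico (0:ℝ) T, φ t ≤ 3 * C₁ * ε * (1 + t) ^ (-(p - 1)) := by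
  intro t ht
  by_contra! hbad
  have hIcc : ∀ {u}, u ≤ t → Icc 0 u ⊆ Ico 0 T := fun hut _ hs =>
    ⟨hs.1, (hs.2.trans hut).trans_lt ht.2⟩
  obtain ⟨u, ⟨⟨hu0, hut⟩, hcross⟩, hleast⟩ := exists_isLeast_le_of_continuousOn
    (g := fun s => 3 * C₁ * ε * (1 + s) ^ (-(p - 1))) (hcont.mono (hIcc le_rfl))
    (continuousOn_const.mul ((continuousOn_one_add_rpow _).mono fun _ hs => hs.1)) ht.1 hbad.le
  have hbelow : ∀ s ∈ Ioo 0 u, φ s ≤ 3 * C₁ * ε * (1 + s) ^ (-(p - 1)) := fun s hs =>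
    le_of_not_ge fun h => (hleast ⟨⟨hs.1.le, hs.2.le.trans hut⟩, h⟩).not_gt hs.2
  have hεle' : ε * (9 * C₁ * C₂ * (2 ^ (p - 1) * p / (p - 1))) ≤ 1 := by
    rwa [← le_div_iff₀ (by have := sub_pos.2 hp; positivity)]
  have himproved := gronwall_bootstrap hp hC₁ hC₂.le hε.le hεle' hu0
    (hcont.mono (hIcc hut)) (fun s hs => hnonneg s (hIcc hut (Ioo_subset_Icc_self hs)))
    hbelow (hineq u (hIcc hut ⟨hu0, le_rfl⟩))
  have : 0 < C₁ * ε * (1 + u) ^ (-(p - 1)) := by positivity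
  linarith

/-- Gronwall lemma with algebraic integral kernels (Lemma 5.2). -/
theorem stmt_5 (p C₁ C₂ ε T : ℝ) (hp : 1 < p) (hC₁ : 1 ≤ C₁) (hC₂ : 0 < C₂)
    (hε : 0 < ε)
    (hεle : ε ≤ 1 / (9 * C₁ * C₂ * (2 ^ (p - 1) * p / (p - 1))))
    (hT : 0 < T) (φ : ℝ → ℝ)
    (hcont : ContinuousOn φ (Set.Ico 0 T))
    (hnonneg : ∀ t ∈ Set.Ico (0:ℝ) T, 0 ≤ φ t)
    (hineq : ∀ t ∈ Set.Ico (0:ℝ) T,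
      φ t ≤ C₁ * ε * (1 + t) ^ (-p) +
        C₂ * ∫ s in (0:ℝ)..t, (ε + φ s) * φ s * (1 + t - s) ^ (-p)) :
    ∀ t ∈ Set.Ico (0:ℝ) T, φ t ≤ 3 * C₁ * ε * (1 + t) ^ (-(p - 1)) :=
  stmt_5_general p C₁ C₂ ε T hp hC₁ hC₂ hε hεle φ hcont hnonneg hineq
end

section
/- For every real p > 1 and every t ≥ 0 one has ∫_0^t (1+t)^{p-1} (1+s)^{-(p-1)} (1+t-s)^{-p} ds ≤ 2^{p-1} p/(p-1). -/
open MeasureTheory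

/-- The convolution-kernel integral estimate used in the Gronwall lemma:
`∫_0^t (1+t)^{p-1} (1+s)^{-(p-1)} (1+t-s)^{-p} ds ≤ 2^{p-1} p/(p-1)` for `p > 1`, `t ≥ 0`. -/
theorem stmt_6 (p t : ℝ) (hp : 1 < p) (ht : 0 ≤ t) :
    (∫ s in (0:ℝ)..t, (1 + t) ^ (p - 1) * (1 + s) ^ (-(p - 1)) * (1 + t - s) ^ (-p))
      ≤ 2 ^ (p - 1) * p / (p - 1) := by
  have h1t : (0:ℝ) < 1 + t := by linarith
  have h2pos : (0:ℝ) < 2 ^ (p - 1) := Real.rpow_pos_of_pos two_pos _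
  set f : ℝ → ℝ := fun s => (1 + t) ^ (p - 1) * (1 + s) ^ (-(p - 1)) * (1 + t - s) ^ (-p)
    with hf
  have hcont : ContinuousOn f (Set.Icc 0 t) := by
    apply ContinuousOn.mul
    · apply ContinuousOn.mul continuousOn_const
      exact ContinuousOn.rpow_const (by fun_prop)
        (fun x hx => Or.inl (by have := hx.1; positivity))
    · exact ContinuousOn.rpow_const (by fun_prop)
        (fun x hx => Or.inl (by simp only [Set.mem_Icc] at hx; nlinarith [hx.2]))
  have hsub1 : Set.uIcc (0:ℝ) (t/2) ⊆ Set.Icc 0 t := by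
    rw [Set.uIcc_of_le (by linarith)]
    exact Set.Icc_subset_Icc le_rfl (by linarith)
  have hsub2 : Set.uIcc (t/2) t ⊆ Set.Icc 0 t := by
    rw [Set.uIcc_of_le (by linarith)]
    exact Set.Icc_subset_Icc (by linarith) le_rfl
  have hi1 : IntervalIntegrable f volume 0 (t/2) :=
    (hcont.mono hsub1).intervalIntegrable
  have hi2 : IntervalIntegrable f volume (t/2) t :=
    (hcont.mono hsub2).intervalIntegrable
  rw [← intervalIntegral.integral_add_adjacent_intervals hi1 hi2]
  -- First piece: bound by constant 2^p/(1+t)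
  have hC : ∀ s ∈ Set.Icc (0:ℝ) (t/2), f s ≤ 2 ^ p / (1 + t) := by
    intro s hs
    obtain ⟨hs0, hs1⟩ := hs
    have hb1 : (1 + s) ^ (-(p - 1)) ≤ 1 :=
      Real.rpow_le_one_of_one_le_of_nonpos (by linarith) (by linarith)
    have hb2 : (1 + t - s) ^ (-p) ≤ ((1 + t) / 2) ^ (-p) :=
      Real.rpow_le_rpow_of_nonpos (by linarith) (by linarith) (by linarith)
    have key : (1 + t) ^ (p - 1) * ((1 + t) / 2) ^ (-p) = 2 ^ p / (1 + t) := by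
      rw [Real.div_rpow (by linarith) (by norm_num), mul_div_assoc', ← Real.rpow_add h1t,
        Real.rpow_neg (by norm_num : (0:ℝ) ≤ 2)]
      have e : p - 1 + -p = -1 := by ring
      rw [e, Real.rpow_neg_one]
      field_simp
    calc f s ≤ (1 + t) ^ (p - 1) * 1 * ((1 + t) / 2) ^ (-p) := by
          apply mul_le_mul _ hb2 (Real.rpow_nonneg (by linarith) _) (by positivity)
          exact mul_le_mul_of_nonneg_left hb1 (by positivity)
      _ = 2 ^ p / (1 + t) := by rw [mul_one, key]
  have h1 : (∫ s in (0:ℝ)..(t/2), f s) ≤ 2 ^ (p - 1) := by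
    have hmono := intervalIntegral.integral_mono_on (by linarith : (0:ℝ) ≤ t/2) hi1
      (intervalIntegrable_const) hC
    rw [intervalIntegral.integral_const, smul_eq_mul, sub_zero] at hmono
    refine hmono.trans ?_
    have h2p : (2:ℝ) ^ p = 2 ^ (p - 1) * 2 := by
      rw [← Real.rpow_add_one (by norm_num : (2:ℝ) ≠ 0) (p - 1)]; norm_num
    calc t / 2 * (2 ^ p / (1 + t)) = 2 ^ (p - 1) * (t / (1 + t)) := by rw [h2p]; ring
      _ ≤ 2 ^ (p - 1) * 1 :=
          mul_le_mul_of_nonneg_left (by rw [div_le_one h1t]; linarith) h2pos.le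
      _ = 2 ^ (p - 1) := mul_one _
  -- Second piece
  have key2 : (1 + t) ^ (p - 1) * ((1 + t) / 2) ^ (-(p - 1)) = 2 ^ (p - 1) := by
    rw [Real.div_rpow (by linarith) (by norm_num), mul_div_assoc', ← Real.rpow_add h1t,
      Real.rpow_neg (by norm_num : (0:ℝ) ≤ 2)]
    have e : p - 1 + -(p - 1) = 0 := by ring
    rw [e, Real.rpow_zero, one_div, inv_inv]
  have hD : ∀ s ∈ Set.Icc (t/2) t, f s ≤ 2 ^ (p - 1) * (1 + t - s) ^ (-p) := by
    intro s hs
    obtain ⟨hs0, hs1⟩ := hs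
    have hb1 : (1 + s) ^ (-(p - 1)) ≤ ((1 + t) / 2) ^ (-(p - 1)) :=
      Real.rpow_le_rpow_of_nonpos (by linarith) (by linarith) (by linarith)
    calc f s ≤ (1 + t) ^ (p - 1) * ((1 + t) / 2) ^ (-(p - 1)) * (1 + t - s) ^ (-p) := by
          apply mul_le_mul_of_nonneg_right _ (Real.rpow_nonneg (by linarith) _)
          exact mul_le_mul_of_nonneg_left hb1 (by positivity)
      _ = 2 ^ (p - 1) * (1 + t - s) ^ (-p) := by rw [key2]
  have hcontg : ContinuousOn (fun s : ℝ => 2 ^ (p - 1) * (1 + t - s) ^ (-p)) (Set.Icc (t/2) t) := by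
    apply ContinuousOn.mul continuousOn_const
    exact ContinuousOn.rpow_const (by fun_prop)
      (fun x hx => Or.inl (by simp only [Set.mem_Icc] at hx; nlinarith [hx.2]))
  have hig : IntervalIntegrable (fun s : ℝ => 2 ^ (p - 1) * (1 + t - s) ^ (-p)) volume (t/2) t :=
    (hcontg.mono (by rw [Set.uIcc_of_le (by linarith)])).intervalIntegrable
  have hcalc : (∫ s in (t/2)..t, (1 + t - s) ^ (-p)) ≤ 1 / (p - 1) := by
    have e1 : (∫ s in (t/2)..t, (1 + t - s) ^ (-p))
        = ∫ x in (t - t)..(t - t/2), (1 + x) ^ (-p) := by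
      rw [← intervalIntegral.integral_comp_sub_left (fun u => (1 + u) ^ (-p)) t]
      congr 1; ext s; ring_nf
    have e2 : (∫ x in (t - t)..(t - t/2), (1 + x) ^ (-p))
        = ∫ y in (1 + (t - t))..(1 + (t - t/2)), y ^ (-p) :=
      intervalIntegral.integral_comp_add_left (fun y => y ^ (-p)) 1
    have e3 : (∫ y in (1 + (t - t))..(1 + (t - t/2)), y ^ (-p))
        = ((1 + (t - t/2)) ^ (-p + 1) - (1 + (t - t)) ^ (-p + 1)) / (-p + 1) := by
      apply integral_rpow
      refine Or.inr ⟨by intro h; rw [neg_eq_iff_eq_neg] at h; linarith, ?_⟩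
      rw [Set.uIcc_of_le (by linarith)]
      intro h
      simp only [Set.mem_Icc] at h
      linarith [h.1]
    rw [e1, e2, e3]
    have hpos : (0:ℝ) < (1 + (t - t/2)) ^ (-p + 1) := Real.rpow_pos_of_pos (by linarith) _
    have h1 : (1 + (t - t)) ^ (-p + 1) = 1 := by norm_num
    rw [h1]
    have e4 : ((1 + (t - t/2)) ^ (-p + 1) - 1) / (-p + 1)
        = (1 - (1 + (t - t/2)) ^ (-p + 1)) / (p - 1) := by
      rw [div_eq_div_iff (by intro h; linarith : -p + 1 ≠ 0) (by intro h; linarith : p - 1 ≠ 0)]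
      ring
    rw [e4, div_le_div_iff₀ (by linarith) (by linarith)]
    nlinarith
  have h2 : (∫ s in (t/2)..t, f s) ≤ 2 ^ (p - 1) / (p - 1) := by
    have hmono := intervalIntegral.integral_mono_on (by linarith : t/2 ≤ t) hi2 hig hD
    rw [intervalIntegral.integral_const_mul] at hmono
    refine hmono.trans ?_
    calc 2 ^ (p - 1) * ∫ s in (t/2)..t, (1 + t - s) ^ (-p)
        ≤ 2 ^ (p - 1) * (1 / (p - 1)) := mul_le_mul_of_nonneg_left hcalc h2pos.le
      _ = 2 ^ (p - 1) / (p - 1) := by rw [mul_one_div]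
  have hne : p - 1 ≠ 0 := by intro h; linarith
  have : 2 ^ (p - 1) + 2 ^ (p - 1) / (p - 1) = 2 ^ (p - 1) * p / (p - 1) := by
    field_simp
    ring
  linarith
end

section
/- Let m ≥ 1, A, B ∈ ℝ^{m×m} and C ∈ ℂ^{m×m} with λ⁻(A) > 0, λ⁻(C) > 0 and |B − Bᵀ|² < 16 λ⁻(A) λ⁻(C). Then the block matrix M = M(A,B,C) is hyperbolic: its characteristic polynomial has no root on the imaginary axis, and the number of its roots (counted with multiplicity) with negative real part equals m, as does the number of roots with positive real part. -/
/-
If `(x, y)` is an eigenvector of `M(A, B, C)` for the eigenvalue `z`, then `y = z x` and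
`C x = z B x + z² A x`. For `z = iω`, the real part of `xᴴ (·)` of this identity says that `ω`
is a root of `a X² + b X + c` with `a = Re(xᴴAx) ≥ λ⁻(A)|x|²`, `c = Re(xᴴCx) ≥ λ⁻(C)|x|²` and
`b = Im(xᴴBx) = (Re x)ᵀ (B - Bᵀ) (Im x)`, so `|b| ≤ |B - Bᵀ| |x|² / 2`; the hypothesis makes
the discriminant `b² - 4ac` negative. The same holds for `M(A, tB, C)`, `0 ≤ t ≤ 1`, so along
this path no root crosses the imaginary axis, and since roots depend continuously on `t`, the
number of roots in the left half-plane is constant. At `t = 0` the matrix `[[0, I], [A⁻¹C, 0]]`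
is conjugate to its negative by `diag(I, -I)`, so its roots are symmetric under `z ↦ -z` and
exactly `m` of the `2m` roots lie on each side.
-/

open Matrix

/-- The lower spectral bound `λ⁻(A) = min { Re (xᴴ A x) : |x| = 1 }` of a complex matrix,
where `|x|` is the Euclidean norm. -/
noncomputable def lowerSpectralBound {m : ℕ} (A : Matrix (Fin m) (Fin m) ℂ) : ℝ :=
  sInf { r : ℝ | ∃ x : Fin m → ℂ,
    (∑ i, Complex.normSq (x i)) = 1 ∧ r = (dotProduct (star x) (A.mulVec x)).re }

/-- The operator (spectral) norm of a real matrix with respect to the Euclidean norm. -/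
noncomputable def euclideanOpNorm {m : ℕ} (B : Matrix (Fin m) (Fin m) ℝ) : ℝ :=
  sSup { r : ℝ | ∃ x : Fin m → ℝ,
    (∑ i, (x i) ^ 2) = 1 ∧ r = Real.sqrt (∑ i, (B.mulVec x i) ^ 2) }

/-- The block matrix `M(A,B,C) = [[0, I],[A⁻¹C, −A⁻¹B]]` (real matrices regarded as complex). -/
noncomputable def blockM {m : ℕ} (A B : Matrix (Fin m) (Fin m) ℝ)
    (C : Matrix (Fin m) (Fin m) ℂ) :
    Matrix (Fin m ⊕ Fin m) (Fin m ⊕ Fin m) ℂ :=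
  Matrix.fromBlocks 0 1 ((A.map Complex.ofReal)⁻¹ * C)
    (-((A.map Complex.ofReal)⁻¹ * (B.map Complex.ofReal)))

open Polynomial Filter Topology

lemma Multiset.exists_eq_map_univ {α : Type*} {n : ℕ} (s : Multiset α)
    (hs : Multiset.card s = n) : ∃ r : Fin n → α, s = Finset.univ.val.map r := by
  subst hs
  refine ⟨fun i => s.toList.get (i.cast (by simp)), ?_⟩
  rw [Fin.univ_val_map]
  conv_lhs => rw [← Multiset.coe_toList s, ← List.ofFn_get s.toList]
  exact congrArg _ (List.ofFn_congr (by simp) _)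

lemma Multiset.card_filter_re_neg_eq_card_filter_re_pos {s : Multiset ℂ} (hs : s.map (-·) = s) :
    card (s.filter (·.re < 0)) = card (s.filter (0 < ·.re)) := by
  conv_lhs => rw [← hs]
  rw [Multiset.filter_map, Multiset.card_map]
  congr 2
  ext z
  simp

lemma Multiset.card_filter_re_neg_add_card_filter_re_pos {s : Multiset ℂ}
    (hs : ∀ z ∈ s, z.re ≠ 0) :
    card (s.filter (·.re < 0)) + card (s.filter (0 < ·.re)) = card s := by
  conv_rhs => rw [← Multiset.filter_add_not (·.re < 0) s]
  rw [Multiset.card_add, Multiset.filter_congr (q := (0 < ·.re)) fun z hz =>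
    not_lt.trans (hs z hz).symm.le_iff_lt]

namespace Polynomial

variable {ι : Type*} [Fintype ι]

lemma roots_prod_univ_X_sub_C {R : Type*} [CommRing R] [IsDomain R] (r : ι → R) :
    (∏ i, (X - C (r i))).roots = Finset.univ.val.map r := by
  rw [Finset.prod_eq_multiset_prod, ← roots_multiset_prod_X_sub_C (Finset.univ.val.map r),
    Multiset.map_map]
  rfl

lemma Monic.exists_eq_prod_X_sub_C {K : Type*} [Field K] [IsAlgClosed K] {p : K[X]} {n : ℕ}
    (hp : p.Monic) (hn : p.natDegree = n) : ∃ r : Fin n → K, p = ∏ i, (X - C (r i)) := by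
  obtain ⟨r, hr⟩ := p.roots.exists_eq_map_univ (IsAlgClosed.card_roots_eq_natDegree.trans hn)
  refine ⟨r, ?_⟩
  conv_lhs => rw [(IsAlgClosed.splits p).eq_prod_roots_of_monic hp, hr, Multiset.map_map]
  rfl

lemma card_filter_roots_prod_univ_X_sub_C (r : ι → ℂ) (P : ℂ → Prop) [DecidablePred P] :
    Multiset.card ((∏ i, (X - C (r i))).roots.filter P) = (Finset.univ.filter (P ∘ r)).card := by
  rw [roots_prod_univ_X_sub_C, Multiset.filter_map, Multiset.card_map]
  rfl

lemma eq_prod_X_sub_C_of_tendsto {κ : Type*} {l : Filter κ} [l.NeBot] {r : κ → ι → ℂ}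
    {ρ : ι → ℂ} {p : ℂ[X]} (hr : Tendsto r l (𝓝 ρ))
    (hp : ∀ z, Tendsto (fun k => (∏ i, (X - C (r k i))).eval z) l (𝓝 (p.eval z))) :
    p = ∏ i, (X - C (ρ i)) := by
  refine Polynomial.funext fun z => tendsto_nhds_unique (hp z) ?_
  simp only [eval_prod, eval_sub, eval_X, eval_C]
  exact tendsto_finsetProd _ fun i _ => tendsto_const_nhds.sub (tendsto_pi_nhds.mp hr i)

lemma eventually_filter_re_neg_eq {κ : Type*} {l : Filter κ} {r : κ → ι → ℂ} {ρ : ι → ℂ}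
    (hr : Tendsto r l (𝓝 ρ)) (hρ : ∀ i, (ρ i).re ≠ 0) :
    ∀ᶠ k in l, (Finset.univ.filter fun i => (r k i).re < 0) =
      Finset.univ.filter fun i => (ρ i).re < 0 := by
  have hre : ∀ i, ∀ᶠ k in l, ((r k i).re < 0 ↔ (ρ i).re < 0) := by
    intro i
    have h := (Complex.continuous_re.tendsto _).comp (tendsto_pi_nhds.mp hr i)
    rcases (hρ i).lt_or_gt with hneg | hpos
    · filter_upwards [h.eventually_lt_const hneg] with k hk
      exact iff_of_true hk hneg
    · filter_upwards [h.eventually_const_lt hpos] with k hk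
      exact iff_of_false hk.not_gt hpos.not_gt
  filter_upwards [eventually_all.mpr hre] with k hk
  exact Finset.filter_congr fun i _ => hk i

/- The count is locally constant on `s`: along a sequence of parameters, a subsequence of the
(bounded) root tuples converges to a root tuple of the limit polynomial, and off the imaginary
axis the signs of the real parts then stabilise. -/
theorem card_filter_re_neg_roots_eq_of_isPreconnected {Y : Type*} [TopologicalSpace Y]
    [FirstCountableTopology Y] {n : ℕ} {p : Y → ℂ[X]} {s : Set Y} (hs : IsPreconnected s)
    (hmonic : ∀ t ∈ s, (p t).Monic) (hdeg : ∀ t ∈ s, (p t).natDegree = n)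
    (hcont : ∀ z, ContinuousOn (fun t => (p t).eval z) s) {R : ℝ}
    (hbdd : ∀ t ∈ s, ∀ z ∈ (p t).roots, ‖z‖ ≤ R) (hre : ∀ t ∈ s, ∀ z ∈ (p t).roots, z.re ≠ 0)
    {a b : Y} (ha : a ∈ s) (hb : b ∈ s) :
    Multiset.card ((p a).roots.filter (·.re < 0)) =
      Multiset.card ((p b).roots.filter (·.re < 0)) := by
  refine hs.constant (f := fun t => Multiset.card ((p t).roots.filter (·.re < 0))) ?_ ha hb
  rw [continuousOn_iff_continuous_domRestrict, continuous_iff_seqContinuous]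
  intro u T huT
  refine tendsto_of_subseq_tendsto fun ns hns => ?_
  have hprod : ∀ k, ∃ r : Fin n → ℂ, p (u (ns k)) = ∏ i, (X - C (r i)) := fun k =>
    (hmonic _ (u (ns k)).2).exists_eq_prod_X_sub_C (hdeg _ (u (ns k)).2)
  choose r hr using hprod
  have hrR : ∀ k, r k ∈ Set.univ.pi fun _ => Metric.closedBall (0 : ℂ) R := fun k i _ => by
    refine mem_closedBall_zero_iff.mpr (hbdd _ (u (ns k)).2 _ ?_)
    rw [hr, roots_prod_univ_X_sub_C]
    exact Multiset.mem_map_of_mem _ (Finset.mem_univ_val i)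
  obtain ⟨ρ, -, ms, hms, hρ⟩ :=
    (isCompact_univ_pi fun _ => isCompact_closedBall (0 : ℂ) R).tendsto_subseq hrR
  have huT' : Tendsto (fun k => (u (ns (ms k)) : Y)) atTop (𝓝 T) :=
    (continuous_subtype_val.tendsto T).comp (huT.comp (hns.comp hms.tendsto_atTop))
  have hpT : p T = ∏ i, (X - C (ρ i)) := eq_prod_X_sub_C_of_tendsto hρ fun z => by
    simpa only [Function.comp_def, ← hr] using
      ((hcont z).continuousWithinAt T.2).tendsto.comp
        (tendsto_nhdsWithin_iff.mpr ⟨huT', .of_forall fun k => (u (ns (ms k))).2⟩)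
  have hρre : ∀ i, (ρ i).re ≠ 0 := fun i => hre T T.2 _ <| by
    rw [hpT, roots_prod_univ_X_sub_C]
    exact Multiset.mem_map_of_mem _ (Finset.mem_univ_val i)
  refine ⟨ms, tendsto_nhds_of_eventually_eq ?_⟩
  filter_upwards [eventually_filter_re_neg_eq hρ hρre] with k hk
  simp only [Set.domRestrict_apply, Function.comp_apply, hr, hpT,
    card_filter_roots_prod_univ_X_sub_C]
  exact congrArg Finset.card hk

end Polynomial

namespace Matrix

variable {n : Type*} [Fintype n] [DecidableEq n]

lemma exists_mulVec_eq_smul_of_mem_roots_charpoly {K : Type*} [Field K] {M : Matrix n n K}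
    {z : K} (hz : z ∈ M.charpoly.roots) : ∃ v ≠ 0, M *ᵥ v = z • v := by
  obtain ⟨v, hv0, hv⟩ := exists_mulVec_eq_zero_iff.mpr
    ((eval_charpoly M z).symm.trans (isRoot_of_mem_roots hz))
  refine ⟨v, hv0, ?_⟩
  rw [sub_mulVec, scalar_apply, diagonal_const_mulVec, sub_eq_zero] at hv
  exact hv.symm

attribute [local instance] Matrix.linftyOpNormedRing Matrix.linftyOpNormedAlgebra in
lemma exists_forall_norm_le_of_mem_roots_charpoly {Y : Type*} [TopologicalSpace Y]
    {γ : Y → Matrix n n ℂ} {s : Set Y} (hs : IsCompact s) (hγ : ContinuousOn γ s) :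
    ∃ R, ∀ t ∈ s, ∀ z ∈ (γ t).charpoly.roots, ‖z‖ ≤ R := by
  -- `exact` sees through the norm's topology, which is the product topology by definition
  obtain ⟨R, hR⟩ := hs.exists_bound_of_continuousOn (f := γ) (by exact hγ)
  refine ⟨R * ‖(1 : Matrix n n ℂ)‖, fun t ht z hz => ?_⟩
  have hzσ : z ∈ spectrum ℂ (γ t) :=
    mem_spectrum_iff_isRoot_charpoly.mpr (isRoot_of_mem_roots hz)
  calc ‖z‖ ≤ ‖γ t‖ * ‖(1 : Matrix n n ℂ)‖ :=
        mem_closedBall_zero_iff.mp (spectrum.subset_closedBall_norm_mul _ hzσ)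
    _ ≤ R * ‖(1 : Matrix n n ℂ)‖ := by gcongr; exact hR t ht

theorem card_filter_re_neg_roots_charpoly_eq {Y : Type*} [TopologicalSpace Y]
    [FirstCountableTopology Y] {γ : Y → Matrix n n ℂ} {s : Set Y} (hsc : IsCompact s)
    (hsp : IsPreconnected s) (hγ : ContinuousOn γ s)
    (hre : ∀ t ∈ s, ∀ z ∈ (γ t).charpoly.roots, z.re ≠ 0) {a b : Y} (ha : a ∈ s) (hb : b ∈ s) :
    Multiset.card ((γ a).charpoly.roots.filter (·.re < 0)) =
      Multiset.card ((γ b).charpoly.roots.filter (·.re < 0)) := by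
  obtain ⟨R, hR⟩ := exists_forall_norm_le_of_mem_roots_charpoly hsc hγ
  refine card_filter_re_neg_roots_eq_of_isPreconnected hsp (fun t _ => charpoly_monic _)
    (fun t _ => charpoly_natDegree_eq_dim _) (fun z => ?_) hR hre ha hb
  simp only [eval_charpoly]
  exact continuous_id.matrix_det.comp_continuousOn (continuousOn_const.sub hγ)

lemma charpoly_comp_neg_X {R : Type*} [CommRing R] (M : Matrix n n R) :
    M.charpoly.comp (-X) = (-1) ^ Fintype.card n * (-M).charpoly := by
  have h : (charmatrix M).map (compRingHom (-X)) = -charmatrix (-M) := by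
    ext i j
    by_cases hij : i = j
    · subst hij; simp [charmatrix_apply_eq]; ring
    · simp [charmatrix_apply_ne _ _ _ hij]
  rw [charpoly, ← coe_compRingHom_apply, RingHom.map_det, RingHom.mapMatrix_apply, h, det_neg,
    charpoly]

lemma charpoly_neg_fromBlocks_zero_one {R : Type*} [CommRing R] (G : Matrix n n R) :
    (-fromBlocks 0 1 G 0).charpoly =
      (fromBlocks 0 1 G 0 : Matrix (n ⊕ n) (n ⊕ n) R).charpoly := by
  set J : Matrix (n ⊕ n) (n ⊕ n) R := fromBlocks 1 0 0 (-1)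
  have hJ : J * J = 1 := by simp [J, fromBlocks_multiply, fromBlocks_one]
  have hconj : J * (fromBlocks 0 1 G 0 * J) = -fromBlocks 0 1 G 0 := by
    simp [J, fromBlocks_multiply, fromBlocks_neg]
  rw [← hconj, charpoly_mul_comm, mul_assoc, hJ, mul_one]

theorem card_filter_re_neg_roots_charpoly_fromBlocks_zero_one (G : Matrix n n ℂ)
    (hre : ∀ z ∈ (fromBlocks 0 1 G 0).charpoly.roots, z.re ≠ 0) :
    Multiset.card ((fromBlocks 0 1 G 0).charpoly.roots.filter (·.re < 0)) = Fintype.card n := by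
  set M : Matrix (n ⊕ n) (n ⊕ n) ℂ := fromBlocks 0 1 G 0
  have hsymm : M.charpoly.roots.map (-·) = M.charpoly.roots := by
    rw [← roots_comp_neg_X, charpoly_comp_neg_X, charpoly_neg_fromBlocks_zero_one,
      Fintype.card_sum, ← two_mul, pow_mul, neg_one_sq, one_pow, one_mul]
  have htotal := Multiset.card_filter_re_neg_add_card_filter_re_pos hre
  rw [← Multiset.card_filter_re_neg_eq_card_filter_re_pos hsymm,
    IsAlgClosed.card_roots_eq_natDegree, charpoly_natDegree_eq_dim, Fintype.card_sum] at htotal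
  omega

end Matrix

lemma isCompact_setOf_sum_norm_sq_eq_one {ι E : Type*} [Fintype ι] [NormedAddCommGroup E]
    [ProperSpace E] : IsCompact {x : ι → E | ∑ i, ‖x i‖ ^ 2 = 1} := by
  refine Metric.isCompact_of_isClosed_isBounded (isClosed_eq (by fun_prop) continuous_const)
    (isBounded_iff_forall_norm_le.mpr ⟨1, fun x (hx : ∑ i, ‖x i‖ ^ 2 = 1) => ?_⟩)
  refine (pi_norm_le_iff_of_nonneg zero_le_one).mpr fun i => ?_
  refine (sq_le_one_iff₀ (norm_nonneg _)).mp ?_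
  rw [← hx]
  exact Finset.single_le_sum (fun j _ => sq_nonneg ‖x j‖) (Finset.mem_univ i)

lemma exists_eq_mul_of_sq_homogeneous {V : Type*} [AddCommGroup V] [Module ℝ V] {S q : V → ℝ}
    (hS : ∀ (c : ℝ) x, S (c • x) = c ^ 2 * S x) (hq : ∀ (c : ℝ) x, q (c • x) = c ^ 2 * q x)
    {x : V} (hx : 0 < S x) : ∃ y, S y = 1 ∧ q x = S x * q y := by
  have hc : (√(S x))⁻¹ ^ 2 * S x = 1 := by
    rw [inv_pow, Real.sq_sqrt hx.le, inv_mul_cancel₀ hx.ne']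
  refine ⟨(√(S x))⁻¹ • x, by rw [hS, hc], ?_⟩
  rw [hq, ← mul_assoc, mul_comm (S x), hc, one_mul]

section QuadraticForms
variable {ι : Type*} [Fintype ι] {m : ℕ}

lemma sum_normSq_pos {x : ι → ℂ} (hx : x ≠ 0) :
    0 < ∑ i, Complex.normSq (x i) := by
  obtain ⟨i, hi⟩ := Function.ne_iff.mp hx
  exact (Complex.normSq_pos.mpr hi).trans_le
    (Finset.single_le_sum (fun j _ => Complex.normSq_nonneg (x j)) (Finset.mem_univ i))

lemma sum_normSq_smul (c : ℝ) (x : ι → ℂ) :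
    ∑ i, Complex.normSq ((c • x) i) = c ^ 2 * ∑ i, Complex.normSq (x i) := by
  simp [Finset.mul_sum, Complex.normSq_ofReal, sq]

lemma re_star_dotProduct_mulVec_smul (A : Matrix ι ι ℂ) (c : ℝ) (x : ι → ℂ) :
    (star (c • x) ⬝ᵥ A *ᵥ (c • x)).re = c ^ 2 * (star x ⬝ᵥ A *ᵥ x).re := by
  simp [star_smul, mulVec_smul, smul_dotProduct, dotProduct_smul, sq, mul_assoc]

lemma lowerSpectralBound_mul_le (A : Matrix (Fin m) (Fin m) ℂ) (x : Fin m → ℂ) :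
    lowerSpectralBound A * ∑ i, Complex.normSq (x i) ≤ (star x ⬝ᵥ A *ᵥ x).re := by
  rcases eq_or_ne x 0 with rfl | hx
  · simp
  have h := sum_normSq_pos hx
  obtain ⟨y, hy, hxy⟩ := exists_eq_mul_of_sq_homogeneous
    (S := fun x : Fin m → ℂ => ∑ i, Complex.normSq (x i)) (q := fun x => (star x ⬝ᵥ A *ᵥ x).re)
    sum_normSq_smul (re_star_dotProduct_mulVec_smul A) h
  have hbdd : BddBelow {r : ℝ | ∃ x : Fin m → ℂ,
      (∑ i, Complex.normSq (x i)) = 1 ∧ r = (star x ⬝ᵥ A *ᵥ x).re} := by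
    refine (isCompact_setOf_sum_norm_sq_eq_one.bddBelow_image (f := fun x : Fin m → ℂ =>
      (star x ⬝ᵥ A *ᵥ x).re) (by fun_prop)).mono ?_
    rintro _ ⟨x, hx, rfl⟩
    exact ⟨x, by simpa [Complex.normSq_eq_norm_sq] using hx, rfl⟩
  rw [hxy, mul_comm]
  exact mul_le_mul_of_nonneg_left (csInf_le hbdd ⟨y, hy, rfl⟩) h.le

lemma euclideanOpNorm_nonneg (D : Matrix (Fin m) (Fin m) ℝ) : 0 ≤ euclideanOpNorm D :=
  Real.sSup_nonneg (by rintro _ ⟨x, -, rfl⟩; positivity)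

lemma sum_mulVec_sq_le (D : Matrix (Fin m) (Fin m) ℝ) (v : Fin m → ℝ) :
    ∑ i, (D *ᵥ v) i ^ 2 ≤ euclideanOpNorm D ^ 2 * ∑ i, v i ^ 2 := by
  rcases eq_or_ne v 0 with rfl | hv
  · simp
  have h : 0 < ∑ i, v i ^ 2 := by
    obtain ⟨i, hi⟩ := Function.ne_iff.mp hv
    exact (sq_pos_of_ne_zero hi).trans_le
      (Finset.single_le_sum (fun j _ => sq_nonneg (v j)) (Finset.mem_univ i))
  obtain ⟨w, hw, hvw⟩ := exists_eq_mul_of_sq_homogeneous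
    (S := fun v : Fin m → ℝ => ∑ i, v i ^ 2) (q := fun v => ∑ i, (D *ᵥ v) i ^ 2)
    (fun c v => by simp [mul_pow, Finset.mul_sum])
    (fun c v => by simp [mulVec_smul, mul_pow, Finset.mul_sum]) h
  have hbdd : BddAbove {r : ℝ | ∃ x : Fin m → ℝ,
      (∑ i, (x i) ^ 2) = 1 ∧ r = Real.sqrt (∑ i, (D *ᵥ x) i ^ 2)} := by
    refine (isCompact_setOf_sum_norm_sq_eq_one.bddAbove_image (f := fun x : Fin m → ℝ =>
      √(∑ i, (D *ᵥ x) i ^ 2)) (by fun_prop)).mono ?_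
    rintro _ ⟨x, hx, rfl⟩
    exact ⟨x, by simpa using hx, rfl⟩
  have hw' := (Real.sqrt_le_left (euclideanOpNorm_nonneg D)).mp (le_csSup hbdd ⟨w, hw, rfl⟩)
  rw [hvw, mul_comm]
  exact mul_le_mul_of_nonneg_right hw' h.le

lemma im_star_dotProduct_map_ofReal_mulVec (B : Matrix ι ι ℝ)
    (x : ι → ℂ) :
    (star x ⬝ᵥ B.map Complex.ofReal *ᵥ x).im =
      (fun i => (x i).re) ⬝ᵥ (B - Bᵀ) *ᵥ fun i => (x i).im := by
  have lhs : (star x ⬝ᵥ B.map Complex.ofReal *ᵥ x).im =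
      ∑ i, ∑ j, B i j * ((x i).re * (x j).im - (x i).im * (x j).re) := by
    simp only [dotProduct, mulVec, Finset.mul_sum, Complex.im_sum]
    refine Finset.sum_congr rfl fun i _ => Finset.sum_congr rfl fun j _ => ?_
    simp [Complex.mul_im]
    ring
  have rhs : ((fun i => (x i).re) ⬝ᵥ (B - Bᵀ) *ᵥ fun i => (x i).im) =
      ∑ i, ∑ j, B i j * ((x i).re * (x j).im) - ∑ i, ∑ j, B j i * ((x i).re * (x j).im) := by
    simp only [dotProduct, mulVec, Finset.mul_sum, ← Finset.sum_sub_distrib]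
    refine Finset.sum_congr rfl fun i _ => Finset.sum_congr rfl fun j _ => ?_
    simp
    ring
  rw [lhs, rhs, Finset.sum_comm (f := fun i j => B j i * _), ← Finset.sum_sub_distrib]
  refine Finset.sum_congr rfl fun i _ => ?_
  rw [← Finset.sum_sub_distrib]
  exact Finset.sum_congr rfl fun j _ => by ring

lemma abs_im_star_dotProduct_map_ofReal_mulVec_le (B : Matrix (Fin m) (Fin m) ℝ)
    (x : Fin m → ℂ) :
    |(star x ⬝ᵥ B.map Complex.ofReal *ᵥ x).im| ≤
      euclideanOpNorm (B - Bᵀ) / 2 * ∑ i, Complex.normSq (x i) := by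
  set u : Fin m → ℝ := fun i => (x i).re
  set v : Fin m → ℝ := fun i => (x i).im
  set N := euclideanOpNorm (B - Bᵀ)
  have hN : 0 ≤ N := euclideanOpNorm_nonneg _
  have hS : ∑ i, Complex.normSq (x i) = ∑ i, u i ^ 2 + ∑ i, v i ^ 2 := by
    simp only [Complex.normSq_apply, ← Finset.sum_add_distrib, u, v, sq]
  have hcs := Finset.sum_mul_sq_le_sq_mul_sq Finset.univ u ((B - Bᵀ) *ᵥ v)
  have hop := sum_mulVec_sq_le (B - Bᵀ) v
  rw [im_star_dotProduct_map_ofReal_mulVec, hS]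
  refine abs_le_of_sq_le_sq ?_ (by positivity)
  calc (u ⬝ᵥ (B - Bᵀ) *ᵥ v) ^ 2 ≤ (∑ i, u i ^ 2) * (N ^ 2 * ∑ i, v i ^ 2) :=
        hcs.trans (mul_le_mul_of_nonneg_left hop (by positivity))
    _ ≤ (N / 2 * (∑ i, u i ^ 2 + ∑ i, v i ^ 2)) ^ 2 := by
        nlinarith [sq_nonneg (∑ i, u i ^ 2 - ∑ i, v i ^ 2), sq_nonneg N]

end QuadraticForms

lemma isUnit_det_of_lowerSpectralBound_pos {m : ℕ} {A : Matrix (Fin m) (Fin m) ℂ}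
    (hA : 0 < lowerSpectralBound A) : IsUnit A.det := by
  refine isUnit_iff_ne_zero.mpr fun hdet => ?_
  obtain ⟨v, hv0, hv⟩ := exists_mulVec_eq_zero_iff.mpr hdet
  have h := lowerSpectralBound_mul_le A v
  rw [hv, dotProduct_zero, Complex.zero_re] at h
  exact (mul_pos hA (sum_normSq_pos hv0)).not_ge h

section Hyperbolicity
variable {m : ℕ} {A B : Matrix (Fin m) (Fin m) ℝ} {C : Matrix (Fin m) (Fin m) ℂ}

lemma exists_mulVec_eq_of_mem_roots_charpoly_blockM (hA : IsUnit (A.map Complex.ofReal).det)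
    {z : ℂ} (hz : z ∈ (blockM A B C).charpoly.roots) :
    ∃ x ≠ 0, C *ᵥ x = z • (B.map Complex.ofReal *ᵥ x) + z ^ 2 • (A.map Complex.ofReal *ᵥ x) := by
  obtain ⟨v, hv0, hv⟩ := exists_mulVec_eq_smul_of_mem_roots_charpoly hz
  obtain ⟨x, y, rfl⟩ : ∃ x y, v = Sum.elim x y := ⟨_, _, (Sum.elim_comp_inl_inr v).symm⟩
  have hy : y = z • x := funext fun i => by
    simpa [blockM, fromBlocks_mulVec] using congrFun hv (Sum.inl i)
  have hx : ((A.map Complex.ofReal)⁻¹ * C) *ᵥ x -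
      ((A.map Complex.ofReal)⁻¹ * B.map Complex.ofReal) *ᵥ y = z • y := funext fun i => by
    simpa [blockM, fromBlocks_mulVec, sub_eq_add_neg, neg_mulVec] using congrFun hv (Sum.inr i)
  subst hy
  refine ⟨x, fun h => hv0 (by simp [h]), ?_⟩
  have := congrArg (A.map Complex.ofReal *ᵥ ·) hx
  simp only [mulVec_sub, mulVec_mulVec, ← mul_assoc, mul_nonsing_inv _ hA, one_mul, mulVec_smul,
    smul_smul] at this
  rw [sq, ← this]
  abel

theorem re_ne_zero_of_mem_roots_charpoly_blockM
    (hA : 0 < lowerSpectralBound (A.map Complex.ofReal)) (hC : 0 < lowerSpectralBound C) {κ : ℝ}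
    (hB : ∀ x, |(star x ⬝ᵥ B.map Complex.ofReal *ᵥ x).im| ≤ κ * ∑ i, Complex.normSq (x i))
    (hκ : κ ^ 2 < 4 * lowerSpectralBound (A.map Complex.ofReal) * lowerSpectralBound C)
    {z : ℂ} (hz : z ∈ (blockM A B C).charpoly.roots) : z.re ≠ 0 := by
  intro hre
  obtain ⟨x, hx0, hx⟩ :=
    exists_mulVec_eq_of_mem_roots_charpoly_blockM (isUnit_det_of_lowerSpectralBound_pos hA) hz
  have hS := sum_normSq_pos hx0
  have ha := lowerSpectralBound_mul_le (A.map Complex.ofReal) x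
  have hc := lowerSpectralBound_mul_le C x
  have hb := hB x
  have hquad := congrArg (fun w => (star x ⬝ᵥ w).re) hx
  simp only [dotProduct_add, dotProduct_smul, smul_eq_mul, Complex.add_re, Complex.mul_re,
    Complex.mul_im, sq, hre, zero_mul, mul_zero, add_zero, zero_sub, sub_zero] at hquad
  set S := ∑ i, Complex.normSq (x i)
  set a := (star x ⬝ᵥ A.map Complex.ofReal *ᵥ x).re
  set b := (star x ⬝ᵥ B.map Complex.ofReal *ᵥ x).im
  set c := (star x ⬝ᵥ C *ᵥ x).re
  set lA := lowerSpectralBound (A.map Complex.ofReal)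
  set lC := lowerSpectralBound C
  have hdisc := discrim_eq_sq_of_quadratic_eq_zero (x := z.im) (a := a) (b := b) (c := c)
    (by linarith)
  have hneg : b ^ 2 < 4 * a * c := calc
    b ^ 2 ≤ (κ * S) ^ 2 := sq_le_sq' (abs_le.mp hb).1 (abs_le.mp hb).2
    _ < 4 * (lA * S) * (lC * S) := by nlinarith [pow_pos hS 2]
    _ ≤ 4 * a * c := by
      nlinarith [mul_le_mul ha hc (by positivity) ((mul_pos hA hS).le.trans ha)]
  rw [discrim] at hdisc
  nlinarith [sq_nonneg (2 * a * z.im + b)]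

lemma abs_im_star_dotProduct_map_ofReal_smul_mulVec_le {t : ℝ} (ht : |t| ≤ 1)
    (B : Matrix (Fin m) (Fin m) ℝ) (x : Fin m → ℂ) :
    |(star x ⬝ᵥ (t • B).map Complex.ofReal *ᵥ x).im| ≤
      euclideanOpNorm (B - Bᵀ) / 2 * ∑ i, Complex.normSq (x i) := by
  have h : (t • B).map Complex.ofReal = (t : ℂ) • B.map Complex.ofReal := by ext; simp
  rw [h, smul_mulVec, dotProduct_smul, smul_eq_mul, Complex.im_ofReal_mul, abs_mul]
  exact (mul_le_of_le_one_left (abs_nonneg _) ht).trans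
    (abs_im_star_dotProduct_map_ofReal_mulVec_le B x)

lemma continuous_blockM_smul (A B : Matrix (Fin m) (Fin m) ℝ) (C : Matrix (Fin m) (Fin m) ℂ) :
    Continuous fun t : ℝ => blockM A (t • B) C :=
  continuous_const.matrix_fromBlocks continuous_const continuous_const
    (continuous_const.matrix_mul
      ((continuous_id.smul continuous_const).matrix_map Complex.continuous_ofReal)).neg

end Hyperbolicity

theorem stmt_7_general (m : ℕ) (A B : Matrix (Fin m) (Fin m) ℝ)
    (C : Matrix (Fin m) (Fin m) ℂ)
    (hA : 0 < lowerSpectralBound (A.map Complex.ofReal))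
    (hC : 0 < lowerSpectralBound C)
    (hB : euclideanOpNorm (B - B.transpose) ^ 2 <
      16 * lowerSpectralBound (A.map Complex.ofReal) * lowerSpectralBound C) :
    (∀ z ∈ (blockM A B C).charpoly.roots, z.re ≠ 0) ∧
    Multiset.card ((blockM A B C).charpoly.roots.filter (fun z => z.re < 0)) = m ∧
    Multiset.card ((blockM A B C).charpoly.roots.filter (fun z => 0 < z.re)) = m := by
  set M : ℝ → Matrix (Fin m ⊕ Fin m) (Fin m ⊕ Fin m) ℂ := fun t => blockM A (t • B) C
  have hre : ∀ t ∈ Set.Icc (0 : ℝ) 1, ∀ z ∈ (M t).charpoly.roots, z.re ≠ 0 := fun t ht _ =>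
    re_ne_zero_of_mem_roots_charpoly_blockM hA hC
      (abs_im_star_dotProduct_map_ofReal_smul_mulVec_le (abs_le.mpr ⟨by linarith [ht.1], ht.2⟩) B)
      (by linarith)
  have h0 : M 0 = fromBlocks 0 1 ((A.map Complex.ofReal)⁻¹ * C) 0 := by simp [M, blockM]
  have h1 : M 1 = blockM A B C := by simp [M]
  have hleft0 := card_filter_re_neg_roots_charpoly_fromBlocks_zero_one _
    (h0 ▸ hre 0 ⟨le_rfl, zero_le_one⟩)
  have hre1 : ∀ z ∈ (blockM A B C).charpoly.roots, z.re ≠ 0 := h1 ▸ hre 1 ⟨zero_le_one, le_rfl⟩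
  have hleft : Multiset.card ((blockM A B C).charpoly.roots.filter (·.re < 0)) = m := by
    have hpath := card_filter_re_neg_roots_charpoly_eq (γ := M) isCompact_Icc isPreconnected_Icc
      (continuous_blockM_smul A B C).continuousOn hre ⟨zero_le_one, le_rfl⟩ ⟨le_rfl, zero_le_one⟩
    rwa [h1, h0, hleft0, Fintype.card_fin] at hpath
  have htotal := Multiset.card_filter_re_neg_add_card_filter_re_pos hre1
  rw [IsAlgClosed.card_roots_eq_natDegree, charpoly_natDegree_eq_dim, Fintype.card_sum,
    Fintype.card_fin] at htotal
  exact ⟨hre1, hleft, by omega⟩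

/-- Lemma B.1 (i): hyperbolicity of the block matrix `M(A,B,C)`. -/
theorem stmt_7 (m : ℕ) (hm : 1 ≤ m) (A B : Matrix (Fin m) (Fin m) ℝ)
    (C : Matrix (Fin m) (Fin m) ℂ)
    (hA : 0 < lowerSpectralBound (A.map Complex.ofReal))
    (hC : 0 < lowerSpectralBound C)
    (hB : euclideanOpNorm (B - B.transpose) ^ 2 <
      16 * lowerSpectralBound (A.map Complex.ofReal) * lowerSpectralBound C) :
    (∀ z ∈ (blockM A B C).charpoly.roots, z.re ≠ 0) ∧
    Multiset.card ((blockM A B C).charpoly.roots.filter (fun z => z.re < 0)) = m ∧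
    Multiset.card ((blockM A B C).charpoly.roots.filter (fun z => 0 < z.re)) = m :=
  stmt_7_general m A B C hA hC hB
end

section
/- Let λ be a complex-analytic function on an open neighborhood of 0 in ℂ such that λ(s) is real for all real s in that neighborhood, λ(0) = 0, λ'(0) > 0 and λ''(0) < 0. Then there exist constants C, δ, κ⋆ > 0 such that for every s ∈ ℂ with 0 < |s| ≤ δ and Re s ≥ −κ⋆ (Im s)² one has λ(s) ≠ 0 and |λ(s)|² ≤ C · Re λ(s). -/
/-! `f(s) = A s - β s² + O(s³)` with `A = f'(0) > 0` and `β = -f''(0)/2 > 0` real, because `f`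
is real on the real axis. Hence `Re f(s) = A x - β x² + β y² + O(|s|³)` for `s = x + iy`.
For `x ≥ 0` and `|s|` small, `A x` dominates `β x²`; in the parabolic region
`x ≥ -(β / 4A) y²` the possibly negative term `A x` costs at most `β y² / 4`. Either way
`Re f(s) ≳ |s|²`, while `|f(s)| ≲ |s|` since `f(0) = 0`. -/

open Filter Topology Asymptotics Complex Nat

theorem HasFPowerSeriesAt.factorial_smul_coeff {𝕜 F : Type*} [NontriviallyNormedField 𝕜]
    [NormedAddCommGroup F] [NormedSpace 𝕜 F] [CompleteSpace F] {f : 𝕜 → F}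
    {p : FormalMultilinearSeries 𝕜 𝕜 F} {x : 𝕜} (hp : HasFPowerSeriesAt f p x) (n : ℕ) :
    n ! • p.coeff n = iteratedDeriv n f x := by
  obtain ⟨r, hr⟩ := hp
  simpa [iteratedDeriv_eq_iteratedFDeriv, FormalMultilinearSeries.apply_eq_pow_smul_coeff]
    using hr.factorial_smul 1 n

theorem AnalyticAt.isBigO_sub_taylor_two {𝕜 : Type*} [NontriviallyNormedField 𝕜] [CharZero 𝕜]
    [CompleteSpace 𝕜] {f : 𝕜 → 𝕜} {x : 𝕜} (hf : AnalyticAt 𝕜 f x) :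
    (fun y ↦ f (x + y) - (f x + deriv f x * y + deriv (deriv f) x / 2 * y ^ 2))
      =O[𝓝 0] fun y ↦ y ^ 3 := by
  obtain ⟨p, hp⟩ := hf
  have h0 : p.coeff 0 = f x := hp.coeff_zero _
  have h1 : p.coeff 1 = deriv f x := hp.deriv.symm
  have h2 : p.coeff 2 = deriv (deriv f) x / 2 := by
    rw [← iteratedDeriv_one, ← iteratedDeriv_succ', ← hp.factorial_smul_coeff 2, nsmul_eq_mul]
    norm_num [Nat.factorial]
  have htaylor (y : 𝕜) :
      p.partialSum 3 y = f x + deriv f x * y + deriv (deriv f) x / 2 * y ^ 2 := by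
    simp [FormalMultilinearSeries.partialSum, Finset.sum_range_succ, h0, h1, h2]
    ring
  simpa [htaylor] using (hp.isBigO_sub_partialSum_pow 3).trans
    ((isBigO_refl (fun y : 𝕜 ↦ y ^ 3) (𝓝 0)).norm_left.congr_left fun y ↦ norm_pow y 3)

theorem im_deriv_eq_zero_of_eventually_im_eq_zero {g : ℂ → ℂ} {t : ℝ}
    (hg : DifferentiableAt ℂ g t) (hre : ∀ᶠ x : ℝ in 𝓝 t, (g x).im = 0) :
    (deriv g t).im = 0 := by
  have h : HasDerivAt (fun x : ℝ ↦ (g x).im) (deriv g t).im t :=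
    imCLM.hasFDerivAt.comp_hasDerivAt t hg.hasDerivAt.comp_ofReal
  exact h.unique ((hasDerivAt_const t 0).congr_of_eventuallyEq hre)

theorem AnalyticAt.eventually_im_deriv_eq_zero {g : ℂ → ℂ} {t : ℝ} (hg : AnalyticAt ℂ g t)
    (hre : ∀ᶠ x : ℝ in 𝓝 t, (g x).im = 0) : ∀ᶠ x : ℝ in 𝓝 t, (deriv g x).im = 0 := by
  have hanalytic : ∀ᶠ x : ℝ in 𝓝 t, AnalyticAt ℂ g x :=
    continuous_ofReal.continuousAt.eventually hg.eventually_analyticAt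
  filter_upwards [hre.eventually_nhds, hanalytic] with x hx hxa
  exact im_deriv_eq_zero_of_eventually_im_eq_zero hxa.differentiableAt hx

theorem mul_sq_norm_le_re_mul_sub_mul_sq {A β : ℝ} (hA : 0 < A) (hβ : 0 < β) {s : ℂ}
    (hs : ‖s‖ ≤ A / (2 * β)) (hreg : -(β / (4 * A)) * s.im ^ 2 ≤ s.re) :
    β / 4 * ‖s‖ ^ 2 ≤ ((A : ℂ) * s - β * s ^ 2).re := by
  have hre : ((A : ℂ) * s - β * s ^ 2).re = A * s.re - β * s.re ^ 2 + β * s.im ^ 2 := by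
    simp [sq]; ring
  have hnorm : ‖s‖ ^ 2 = s.re ^ 2 + s.im ^ 2 := by
    rw [← normSq_eq_norm_sq, normSq_apply]; ring
  have hsmall : 2 * β * s.re ^ 2 ≤ A * |s.re| := by
    have h := (abs_re_le_norm s).trans hs
    rw [le_div_iff₀ (by positivity)] at h
    nlinarith [abs_nonneg s.re, sq_abs s.re]
  rw [hre, hnorm]
  rcases le_or_gt 0 s.re with hx | hx
  · rw [abs_of_nonneg hx] at hsmall
    nlinarith [sq_nonneg s.re, sq_nonneg s.im]
  · rw [abs_of_neg hx] at hsmall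
    have hAx : -(β / 4 * s.im ^ 2) ≤ A * s.re := by
      have := mul_le_mul_of_nonneg_left hreg hA.le
      field_simp at this ⊢
      linarith
    nlinarith [sq_nonneg s.re, sq_nonneg s.im]

theorem eventually_mul_sq_norm_le_re_of_isBigO {f : ℂ → ℂ} {A β : ℝ} (hA : 0 < A) (hβ : 0 < β)
    (hf : (fun s ↦ f s - (A * s - β * s ^ 2)) =O[𝓝 0] fun s ↦ s ^ 3) :
    ∀ᶠ s in 𝓝 0, -(β / (4 * A)) * s.im ^ 2 ≤ s.re → β / 8 * ‖s‖ ^ 2 ≤ (f s).re := by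
  have hrem := (hf.trans_isLittleO (isLittleO_pow_pow (by norm_num : 2 < 3))).bound
    (by positivity : 0 < β / 8)
  filter_upwards [hrem, Metric.closedBall_mem_nhds (0 : ℂ) (by positivity : 0 < A / (2 * β))]
    with s hs hball hreg
  have hmodel := mul_sq_norm_le_re_mul_sub_mul_sq hA hβ (mem_closedBall_zero_iff.mp hball) hreg
  have hre := neg_le_of_abs_le ((abs_re_le_norm _).trans hs)
  rw [norm_pow, sub_re] at hre
  linarith

theorem exists_sq_norm_le_mul_re_of_isBigO {f : ℂ → ℂ} {A β : ℝ} (hA : 0 < A) (hβ : 0 < β)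
    (hdiff : DifferentiableAt ℂ f 0) (hf0 : f 0 = 0)
    (hf : (fun s ↦ f s - (A * s - β * s ^ 2)) =O[𝓝 0] fun s ↦ s ^ 3) :
    ∃ C : ℝ, 0 < C ∧ ∃ δ : ℝ, 0 < δ ∧
      ∀ s : ℂ, s ≠ 0 → ‖s‖ ≤ δ → -(β / (4 * A)) * s.im ^ 2 ≤ s.re →
        f s ≠ 0 ∧ ‖f s‖ ^ 2 ≤ C * (f s).re := by
  obtain ⟨M, hM, hupper⟩ := hdiff.hasDerivAt.isBigO_sub.exists_pos
  obtain ⟨δ, hδ, hball⟩ := Metric.nhds_basis_closedBall.eventually_iff.mp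
    (hupper.bound.and (eventually_mul_sq_norm_le_re_of_isBigO hA hβ hf))
  refine ⟨M ^ 2 / (β / 8), by positivity, δ, hδ, fun s hs hsδ hreg ↦ ?_⟩
  obtain ⟨hfs, hres⟩ := hball (mem_closedBall_zero_iff.mpr hsδ)
  rw [hf0, sub_zero, sub_zero] at hfs
  have hpos : 0 < (f s).re := lt_of_lt_of_le (by positivity) (hres hreg)
  refine ⟨fun h ↦ by simp [h] at hpos, ?_⟩
  calc ‖f s‖ ^ 2 ≤ (M * ‖s‖) ^ 2 := by gcongr
    _ = M ^ 2 / (β / 8) * (β / 8 * ‖s‖ ^ 2) := by field_simp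
    _ ≤ M ^ 2 / (β / 8) * (f s).re := by gcongr; exact hres hreg

/-- Lemma 3.3 (ii)(c), abstract version: if `λ` is analytic near `0`, real on the reals,
with `λ(0) = 0`, `λ'(0) > 0`, `λ''(0) < 0`, then there are `C, δ, κ⋆ > 0` such that
`λ(s) ≠ 0` and `|λ(s)|² ≤ C Re λ(s)` whenever `0 < |s| ≤ δ` and `Re s ≥ −κ⋆ (Im s)²`. -/
theorem stmt_11 (f : ℂ → ℂ) (U : Set ℂ) (hU : IsOpen U) (h0 : (0 : ℂ) ∈ U)
    (hf : ∀ z ∈ U, AnalyticAt ℂ f z)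
    (hreal : ∀ s : ℝ, (s : ℂ) ∈ U → (f s).im = 0)
    (hf0 : f 0 = 0)
    (hd1 : 0 < (deriv f 0).re)
    (hd2 : (deriv (deriv f) 0).re < 0) :
    ∃ C : ℝ, 0 < C ∧ ∃ δ : ℝ, 0 < δ ∧ ∃ κ : ℝ, 0 < κ ∧
      ∀ s : ℂ, s ≠ 0 → ‖s‖ ≤ δ → -κ * s.im ^ 2 ≤ s.re →
        f s ≠ 0 ∧ ‖f s‖ ^ 2 ≤ C * (f s).re := by
  have hfa : AnalyticAt ℂ f ((0 : ℝ) : ℂ) := by simpa using hf 0 h0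
  have him_f : ∀ᶠ x : ℝ in 𝓝 0, (f x).im = 0 :=
    eventually_of_mem ((hU.preimage continuous_ofReal).mem_nhds (by simpa using h0)) hreal
  have him_deriv := hfa.eventually_im_deriv_eq_zero him_f
  have him_deriv2 := hfa.deriv.eventually_im_deriv_eq_zero him_deriv
  set A := (deriv f 0).re
  set β := -(deriv (deriv f) 0).re / 2
  have hβ : 0 < β := div_pos (neg_pos.mpr hd2) two_pos
  have hA_eq : deriv f 0 = A := Complex.ext rfl (by simpa using him_deriv.self_of_nhds)
  have hβ_eq : deriv (deriv f) 0 / 2 = -β :=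
    Complex.ext (by simp [β]; ring) (by simpa using him_deriv2.self_of_nhds)
  have htaylor : (fun s ↦ f s - (A * s - β * s ^ 2)) =O[𝓝 0] fun s ↦ s ^ 3 := by
    simpa [hf0, hA_eq, hβ_eq, sub_eq_add_neg] using (hf 0 h0).isBigO_sub_taylor_two
  obtain ⟨C, hC, δ, hδ, hbound⟩ :=
    exists_sq_norm_le_mul_re_of_isBigO hd1 hβ (hf 0 h0).differentiableAt hf0 htaylor
  exact ⟨C, hC, δ, hδ, β / (4 * A), by positivity, hbound⟩
end

section
/- Let α₁ > 0, α₂ ∈ ℝ, c > 0, σ₁ < 0, σ₂ ∈ ℝ, and define A, C₊ and the 4×4 complex matrix family M₊(s) as in the context. Suppose λ : ℂ → ℂ and v : ℂ → ℂ⁴ are differentiable at 0, λ(0) = 0, v(0) = v₀ := (0,1,0,0)ᵀ, and M₊(s) v(s) = λ(s) v(s) for all s in a neighborhood of 0 in ℂ. Then λ'(0) = 1/c. -/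
/-!
`M₊(s) = M₊(0) + s N` with `N = [[0, 0], [A⁻¹, 0]]` is a linear pencil. Pairing the eigen-equation
`M₊(s) v(s) = λ(s) v(s)` with a left null vector `u` of `M₊(0)` and differentiating at `0` gives
the first-order perturbation formula `λ'(0) (u ⬝ v₀) = (u N) ⬝ v₀`. Taking `u = (c r, r A)` with
`r = (σ₂, -σ₁)` both sides are explicit: `u ⬝ v₀ = -c σ₁` and `(u N) ⬝ v₀ = -σ₁`.
-/

open Matrix

/-- The matrix family `M₊(s) = [[0, I₂],[A⁻¹(sI₂ − C₊), −cA⁻¹]]` with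
`A = [[α₁, −α₂],[α₂, α₁]]` and `C₊ = [[σ₁, 0],[σ₂, 0]]`, regarded as a complex `4×4`
matrix indexed by `Fin 2 ⊕ Fin 2`. -/
noncomputable def Mplus (α₁ α₂ c σ₁ σ₂ : ℝ) (s : ℂ) :
    Matrix (Fin 2 ⊕ Fin 2) (Fin 2 ⊕ Fin 2) ℂ :=
  Matrix.fromBlocks 0 1
    ((!![(α₁ : ℂ), -(α₂ : ℂ); (α₂ : ℂ), (α₁ : ℂ)])⁻¹ *
      (s • (1 : Matrix (Fin 2) (Fin 2) ℂ) - !![(σ₁ : ℂ), 0; (σ₂ : ℂ), 0]))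
    (-((c : ℂ) • (!![(α₁ : ℂ), -(α₂ : ℂ); (α₂ : ℂ), (α₁ : ℂ)])⁻¹))

open Filter Topology

section Pencil

variable {𝕜 : Type*} [NontriviallyNormedField 𝕜] {n : Type*} [Fintype n]

theorem HasDerivAt.const_dotProduct {v : 𝕜 → n → 𝕜} {w : n → 𝕜} {s : 𝕜} (a : n → 𝕜)
    (hv : HasDerivAt v w s) : HasDerivAt (fun t => a ⬝ᵥ v t) (a ⬝ᵥ w) s := by
  simp only [dotProduct]
  exact HasDerivAt.fun_sum fun i _ => (hasDerivAt_pi.mp hv i).const_mul (a i)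

/-- Pairing with the left eigenvector `u` eliminates the unknown derivative `v'(s₀)`. -/
theorem eigenvalue_pencil_deriv_mul_dotProduct {M₀ N : Matrix n n 𝕜} {lam : 𝕜 → 𝕜}
    {v : 𝕜 → n → 𝕜} {L : 𝕜} {w : n → 𝕜} {s₀ : 𝕜} (hlam : HasDerivAt lam L s₀)
    (hv : HasDerivAt v w s₀) (heig : ∀ᶠ s in 𝓝 s₀, (M₀ + s • N) *ᵥ v s = lam s • v s)
    {u : n → 𝕜} (hu : u ᵥ* (M₀ + s₀ • N) = lam s₀ • u) :
    L * (u ⬝ᵥ v s₀) = (u ᵥ* N) ⬝ᵥ v s₀ := by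
  have hu₀ : u ᵥ* M₀ = lam s₀ • u - s₀ • (u ᵥ* N) := by
    rw [← hu, vecMul_add, vecMul_smul]; abel
  have hpaired : (fun s => lam s₀ * (u ⬝ᵥ v s) + (s - s₀) * ((u ᵥ* N) ⬝ᵥ v s)) =ᶠ[𝓝 s₀]
      fun s => lam s * (u ⬝ᵥ v s) := by
    filter_upwards [heig] with s hs
    have := congrArg (u ⬝ᵥ ·) hs
    simp only [dotProduct_mulVec, add_mulVec, smul_mulVec, dotProduct_add, dotProduct_smul,
      hu₀, sub_dotProduct, smul_dotProduct, smul_eq_mul] at this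
    linear_combination this
  have hf := hv.const_dotProduct u
  have hlhs := (hf.const_mul (lam s₀)).add
    (((hasDerivAt_id s₀).sub_const s₀).mul (hv.const_dotProduct (u ᵥ* N)))
  have := (hlhs.congr_of_eventuallyEq hpaired.symm).unique (hlam.mul hf)
  simp only [id, sub_self, one_mul, zero_mul, add_zero] at this
  linear_combination -this

end Pencil

def scaledRotation (α₁ α₂ : ℝ) : Matrix (Fin 2) (Fin 2) ℂ :=
  !![(α₁ : ℂ), -(α₂ : ℂ); (α₂ : ℂ), (α₁ : ℂ)]

theorem isUnit_det_scaledRotation {α₁ : ℝ} (hα₁ : α₁ ≠ 0) (α₂ : ℝ) :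
    IsUnit (scaledRotation α₁ α₂).det := by
  have hpos : (0 : ℝ) < α₁ ^ 2 + α₂ ^ 2 := by positivity
  rw [isUnit_iff_ne_zero, scaledRotation, det_fin_two_of]
  exact_mod_cast (by linarith : α₁ * α₁ - -α₂ * α₂ ≠ 0)

theorem vecMul_scaledRotation_vecMul_inv {α₁ α₂ : ℝ} (hA : IsUnit (scaledRotation α₁ α₂).det)
    (r : Fin 2 → ℂ) : (r ᵥ* scaledRotation α₁ α₂) ᵥ* (scaledRotation α₁ α₂)⁻¹ = r := by
  rw [vecMul_vecMul, mul_nonsing_inv _ hA, vecMul_one]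

namespace Mplus

variable (α₁ α₂ c σ₁ σ₂ : ℝ)

theorem eq_fromBlocks (s : ℂ) :
    Mplus α₁ α₂ c σ₁ σ₂ s = fromBlocks 0 1
      ((scaledRotation α₁ α₂)⁻¹ * (s • 1 - !![(σ₁ : ℂ), 0; (σ₂ : ℂ), 0]))
      (-((c : ℂ) • (scaledRotation α₁ α₂)⁻¹)) :=
  rfl

noncomputable def slope : Matrix (Fin 2 ⊕ Fin 2) (Fin 2 ⊕ Fin 2) ℂ :=
  fromBlocks 0 0 (scaledRotation α₁ α₂)⁻¹ 0

theorem eq_add_smul_slope (s : ℂ) :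
    Mplus α₁ α₂ c σ₁ σ₂ s = Mplus α₁ α₂ c σ₁ σ₂ 0 + s • slope α₁ α₂ := by
  rw [eq_fromBlocks, eq_fromBlocks, slope, fromBlocks_smul, fromBlocks_add]
  congr 1
  · simp
  · simp
  · rw [zero_smul, zero_sub, Matrix.mul_neg, mul_sub, Matrix.mul_smul, Matrix.mul_one]; abel
  · simp

/-- `(σ₂, -σ₁)` annihilates the columns of `C₊`; the blocks are chosen so that the second block
times `A⁻¹` is this vector and the first block cancels against `-c A⁻¹`. -/
def leftNullVector : Fin 2 ⊕ Fin 2 → ℂ :=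
  Sum.elim ((c : ℂ) • ![(σ₂ : ℂ), -σ₁]) (![(σ₂ : ℂ), -σ₁] ᵥ* scaledRotation α₁ α₂)

variable {α₁ α₂}

theorem leftNullVector_vecMul_zero (hA : IsUnit (scaledRotation α₁ α₂).det) :
    leftNullVector α₁ α₂ c σ₁ σ₂ ᵥ* Mplus α₁ α₂ c σ₁ σ₂ 0 = 0 := by
  have hC : ![(σ₂ : ℂ), -σ₁] ᵥ* !![(σ₁ : ℂ), 0; (σ₂ : ℂ), 0] = 0 := by simp [mul_comm]
  rw [eq_fromBlocks, leftNullVector, vecMul_fromBlocks]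
  simp only [Sum.elim_comp_inl, Sum.elim_comp_inr, ← vecMul_vecMul, vecMul_neg, vecMul_smul,
    vecMul_scaledRotation_vecMul_inv hA]
  rw [zero_smul, zero_sub, vecMul_neg, vecMul_zero, vecMul_one, zero_add, add_neg_cancel, hC,
    neg_zero, Sum.elim_zero_zero]

theorem leftNullVector_vecMul_slope (hA : IsUnit (scaledRotation α₁ α₂).det) :
    leftNullVector α₁ α₂ c σ₁ σ₂ ᵥ* slope α₁ α₂ = Sum.elim ![(σ₂ : ℂ), -σ₁] (0 : Fin 2 → ℂ) := by
  rw [leftNullVector, slope, vecMul_fromBlocks]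
  simp only [Sum.elim_comp_inl, Sum.elim_comp_inr, vecMul_zero,
    vecMul_scaledRotation_vecMul_inv hA, zero_add, add_zero]

end Mplus

/-- Lemma 3.3: the branch `λ(s)` of the eigenvalue of `M₊(s)` through `0` with
eigenvector branch `v(s)` through `v₀ = (0,1,0,0)ᵀ` satisfies `λ'(0) = 1/c`. -/
theorem stmt_12 (α₁ α₂ c σ₁ σ₂ : ℝ) (hα₁ : 0 < α₁) (hc : 0 < c) (hσ₁ : σ₁ < 0)
    (lam : ℂ → ℂ) (v : ℂ → (Fin 2 ⊕ Fin 2 → ℂ))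
    (hlam : DifferentiableAt ℂ lam 0) (hv : DifferentiableAt ℂ v 0)
    (hlam0 : lam 0 = 0)
    (hv0 : v 0 = Sum.elim ![0, 1] ![0, 0])
    (heig : ∀ᶠ s in nhds (0 : ℂ),
      (Mplus α₁ α₂ c σ₁ σ₂ s).mulVec (v s) = lam s • v s) :
    deriv lam 0 = 1 / (c : ℂ) := by
  have hA := isUnit_det_scaledRotation hα₁.ne' α₂
  have hpencil := heig.mono fun s hs => Mplus.eq_add_smul_slope α₁ α₂ c σ₁ σ₂ s ▸ hs
  have hu : Mplus.leftNullVector α₁ α₂ c σ₁ σ₂ ᵥ*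
      (Mplus α₁ α₂ c σ₁ σ₂ 0 + (0 : ℂ) • Mplus.slope α₁ α₂) =
        lam 0 • Mplus.leftNullVector α₁ α₂ c σ₁ σ₂ := by
    rw [zero_smul, add_zero, Mplus.leftNullVector_vecMul_zero c σ₁ σ₂ hA, hlam0, zero_smul]
  have key := eigenvalue_pencil_deriv_mul_dotProduct hlam.hasDerivAt hv.hasDerivAt hpencil hu
  have hden : Mplus.leftNullVector α₁ α₂ c σ₁ σ₂ ⬝ᵥ Sum.elim ![0, 1] ![0, 0] = -(c * σ₁) := by
    simp [Mplus.leftNullVector]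
  have hnum : Sum.elim ![(σ₂ : ℂ), -σ₁] 0 ⬝ᵥ Sum.elim ![0, 1] ![0, 0] = -σ₁ := by simp
  rw [Mplus.leftNullVector_vecMul_slope c σ₁ σ₂ hA, hv0, hden, hnum] at key
  rw [eq_div_iff (Complex.ofReal_ne_zero.mpr hc.ne')]
  exact mul_right_cancel₀ (Complex.ofReal_ne_zero.mpr hσ₁.ne) (by linear_combination -key)
end

section
/- For every κ > 0, R > 0 and 1/2 < q < 1 there exists a constant C = C(κ,R,q) > 0 such that for all t ≥ 1 one has ∫_{−R}^{R} e^{−tκτ²} (4κ²τ² + 1)^{1/2} (κ²τ⁴ + τ²)^{q−1} dτ ≤ C t^{(1−2q)/2}. -/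
/-!
On `[-R, R]` the factor `(4κ²τ² + 1)^{1/2}` is at most its value at `R`, and
`(κ²τ⁴ + τ²)^{q-1} ≤ |τ|^{2q-2}` because `q - 1 ≤ 0`. Extending the integral to all of `ℝ`
leaves the Gaussian moment `∫ |τ|^s e^{-bτ²} dτ = b^{-(s+1)/2} Γ((s+1)/2)` with `b = tκ`,
whose power of `t` is exactly `t^{(1-2q)/2}`.
-/

open MeasureTheory Real Set

theorem integral_abs_rpow_mul_exp_neg_mul_sq {b s : ℝ} (hb : 0 < b) (hs : -1 < s) :
    ∫ x : ℝ, |x| ^ s * exp (-b * x ^ 2) = b ^ (-(s + 1) / 2) * Gamma ((s + 1) / 2) := by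
  have h := integral_rpow_mul_exp_neg_mul_rpow two_pos hs hb
  simp only [rpow_two] at h
  calc ∫ x : ℝ, |x| ^ s * exp (-b * x ^ 2)
      = ∫ x : ℝ, (fun y => y ^ s * exp (-b * y ^ 2)) |x| := by simp only [sq_abs]
    _ = 2 * ∫ y in Ioi (0 : ℝ), y ^ s * exp (-b * y ^ 2) :=
      integral_comp_abs (f := fun y => y ^ s * exp (-b * y ^ 2))
    _ = _ := by rw [h]; ring

theorem integrable_abs_rpow_mul_exp_neg_mul_sq {b s : ℝ} (hb : 0 < b) (hs : -1 < s) :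
    Integrable fun x : ℝ => |x| ^ s * exp (-b * x ^ 2) := by
  -- the integral is a positive Gamma value, so it is not the junk value of a non-integrable function
  refine Integrable.of_integral_ne_zero ?_
  rw [integral_abs_rpow_mul_exp_neg_mul_sq hb hs]
  have : 0 < (s + 1) / 2 := by linarith
  exact (mul_pos (rpow_pos_of_pos hb _) (Gamma_pos_of_pos this)).ne'

theorem rpow_mul_pow_four_add_sq_le {a r : ℝ} (τ : ℝ) (ha : 0 ≤ a) (hr : r ≤ 0) :
    (a * τ ^ 4 + τ ^ 2) ^ r ≤ |τ| ^ (2 * r) := by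
  have hfactor : a * τ ^ 4 + τ ^ 2 = |τ| ^ 2 * (a * τ ^ 2 + 1) := by rw [sq_abs]; ring
  rw [hfactor, mul_rpow (by positivity) (by positivity), ← rpow_natCast, ← rpow_mul (abs_nonneg τ)]
  push_cast
  exact mul_le_of_le_one_right (by positivity)
    (rpow_le_one_of_one_le_of_nonpos (by nlinarith [sq_nonneg τ]) hr)

/-- The singular Gaussian contour integral estimate from the proof of Theorem 4.1:
`∫_{−R}^{R} e^{−tκτ²} |2κτ + i| |κτ² + iτ|^{2q−2} dτ ≤ C t^{(1−2q)/2}` for `t ≥ 1`. -/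
theorem stmt_15 (κ R q : ℝ) (hκ : 0 < κ) (hR : 0 < R)
    (hq1 : 1 / 2 < q) (hq2 : q < 1) :
    ∃ C : ℝ, 0 < C ∧ ∀ t : ℝ, 1 ≤ t →
      (∫ τ in (-R)..R, Real.exp (-t * κ * τ ^ 2) *
        (4 * κ ^ 2 * τ ^ 2 + 1) ^ ((1:ℝ) / 2) * (κ ^ 2 * τ ^ 4 + τ ^ 2) ^ (q - 1))
        ≤ C * t ^ ((1 - 2 * q) / 2) := by
  set M : ℝ := (4 * κ ^ 2 * R ^ 2 + 1) ^ ((1:ℝ) / 2)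
  have hs : -1 < 2 * (q - 1) := by linarith
  refine ⟨M * κ ^ ((1 - 2 * q) / 2) * Gamma (q - 1 / 2),
    mul_pos (by positivity) (Gamma_pos_of_pos (by linarith)), fun t ht => ?_⟩
  have ht0 : 0 < t := one_pos.trans_le ht
  set g : ℝ → ℝ := fun τ => M * (|τ| ^ (2 * (q - 1)) * exp (-(t * κ) * τ ^ 2))
  have hg : Integrable g := (integrable_abs_rpow_mul_exp_neg_mul_sq (by positivity) hs).const_mul M
  have hbound : ∀ τ ∈ Ioc (-R) R, Real.exp (-t * κ * τ ^ 2) *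
      (4 * κ ^ 2 * τ ^ 2 + 1) ^ ((1:ℝ) / 2) * (κ ^ 2 * τ ^ 4 + τ ^ 2) ^ (q - 1) ≤ g τ := by
    rintro τ ⟨hτl, hτr⟩
    have hτR : τ ^ 2 ≤ R ^ 2 := sq_le_sq' hτl.le hτr
    have hM : (4 * κ ^ 2 * τ ^ 2 + 1) ^ ((1:ℝ) / 2) ≤ M :=
      rpow_le_rpow (by positivity) (by gcongr) (by norm_num)
    have hpow := rpow_mul_pow_four_add_sq_le τ (sq_nonneg κ) (by linarith : q - 1 ≤ 0)
    calc _ ≤ exp (-t * κ * τ ^ 2) * M * |τ| ^ (2 * (q - 1)) := by gcongr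
      _ = g τ := by simp only [g, neg_mul]; ring
  calc (∫ τ in (-R)..R, Real.exp (-t * κ * τ ^ 2) *
        (4 * κ ^ 2 * τ ^ 2 + 1) ^ ((1:ℝ) / 2) * (κ ^ 2 * τ ^ 4 + τ ^ 2) ^ (q - 1))
      ≤ ∫ τ in Ioc (-R) R, g τ := by
        rw [intervalIntegral.integral_of_le (by linarith)]
        refine integral_mono_of_nonneg (.of_forall fun τ => by positivity) hg.integrableOn ?_
        exact (ae_restrict_mem measurableSet_Ioc).mono hbound
    _ ≤ ∫ τ, g τ := setIntegral_le_integral hg (.of_forall fun τ => by positivity)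
    _ = M * (t * κ) ^ ((1 - 2 * q) / 2) * Gamma (q - 1 / 2) := by
        rw [integral_const_mul, integral_abs_rpow_mul_exp_neg_mul_sq (by positivity) hs]
        ring_nf
    _ = _ := by rw [mul_rpow ht0.le hκ.le]; ring
end

section
/- (Weighted Sobolev embedding) For every k ≥ 0 there exists a constant C = C(k) > 0 such that for every continuously differentiable function u : ℝ → ℝ with ‖u‖_{L²_k} < ∞ and ‖u'‖_{L²_k} < ∞, one has sup_{x∈ℝ} (x²+1)^{k/2} |u(x)| ≤ C (‖u‖_{L²_k} + ‖u'‖_{L²_k}). -/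
/-!
For `w = ρ u²` with `ρ(x) = (x² + 1)^k`, the bound `2|x| ≤ x² + 1` gives `|ρ'| ≤ |k| ρ`,
hence `|w'| ≤ (|k| + 1) ρ u² + ρ u'²` is integrable. By the fundamental theorem of calculus
`w x ≤ w y + ∫ |w'|`, and averaging over `y ∈ [x, x + 1]` gives
`w x ≤ ∫ w + ∫ |w'| ≤ (|k| + 2) ‖u‖² + ‖u'‖²`.
-/

open MeasureTheory

theorem apply_le_integral_add_integral_abs_deriv {f : ℝ → ℝ} (hf : Differentiable ℝ f)
    (hf_nonneg : 0 ≤ f) (hf_int : Integrable f) (hf'_int : Integrable (deriv f)) (x : ℝ) :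
    f x ≤ (∫ y, f y) + ∫ y, |deriv f y| := by
  set V := ∫ y, |deriv f y|
  have hvar : ∀ y ∈ Set.Icc x (x + 1), f x - V ≤ f y := by
    intro y ⟨hxy, _⟩
    have hftc : ∫ t in x..y, deriv f t = f y - f x :=
      intervalIntegral.integral_eq_sub_of_hasDerivAt (fun t _ => (hf t).hasDerivAt)
        hf'_int.intervalIntegrable
    have hle : |∫ t in x..y, deriv f t| ≤ V :=
      calc |∫ t in x..y, deriv f t| ≤ ∫ t in x..y, |deriv f t| :=
            intervalIntegral.abs_integral_le_integral_abs hxy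
        _ ≤ V := by
            rw [intervalIntegral.integral_of_le hxy]
            exact setIntegral_le_integral hf'_int.abs (.of_forall fun t => abs_nonneg _)
    linarith [neg_abs_le (∫ t in x..y, deriv f t)]
  have havg : f x - V ≤ ∫ y in x..x + 1, f y :=
    calc f x - V = ∫ _ in x..x + 1, f x - V := by simp
      _ ≤ ∫ y in x..x + 1, f y :=
          intervalIntegral.integral_mono_on (by linarith) intervalIntegrable_const
            hf_int.intervalIntegrable hvar
  have hsub : ∫ y in x..x + 1, f y ≤ ∫ y, f y := by
    rw [intervalIntegral.integral_of_le (by linarith)]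
    exact setIntegral_le_integral hf_int (.of_forall hf_nonneg)
  linarith

theorem abs_deriv_mul_sq_le {ρ u : ℝ → ℝ} {c y : ℝ} (hρ : DifferentiableAt ℝ ρ y)
    (hu : DifferentiableAt ℝ u y) (hρ_nonneg : 0 ≤ ρ y) (hρ' : |deriv ρ y| ≤ c * ρ y) :
    |deriv (fun y => ρ y * u y ^ 2) y|
      ≤ (c + 1) * (ρ y * u y ^ 2) + ρ y * deriv u y ^ 2 := by
  have hderiv : deriv (fun y => ρ y * u y ^ 2) y
      = deriv ρ y * u y ^ 2 + ρ y * (2 * u y * deriv u y) := by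
    rw [(hρ.hasDerivAt.fun_mul (hu.hasDerivAt.fun_pow 2)).deriv]
    ring
  have hamgm : |2 * u y * deriv u y| ≤ u y ^ 2 + deriv u y ^ 2 := by
    rw [abs_le]
    constructor <;> nlinarith [sq_nonneg (u y + deriv u y), sq_nonneg (u y - deriv u y)]
  calc |deriv (fun y => ρ y * u y ^ 2) y|
      ≤ |deriv ρ y| * u y ^ 2 + ρ y * |2 * u y * deriv u y| := by
        rw [hderiv]
        refine (abs_add_le _ _).trans_eq ?_
        rw [abs_mul, abs_mul, abs_of_nonneg hρ_nonneg, abs_of_nonneg (sq_nonneg (u y))]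
    _ ≤ c * ρ y * u y ^ 2 + ρ y * (u y ^ 2 + deriv u y ^ 2) := by
        gcongr
    _ = (c + 1) * (ρ y * u y ^ 2) + ρ y * deriv u y ^ 2 := by ring

theorem abs_deriv_one_add_sq_rpow_le (k y : ℝ) :
    |deriv (fun y => (y ^ 2 + 1) ^ k) y| ≤ |k| * (y ^ 2 + 1) ^ k := by
  have hpos : 0 < y ^ 2 + 1 := by positivity
  have hderiv :
      HasDerivAt (fun y => (y ^ 2 + 1) ^ k) (2 * y * k * (y ^ 2 + 1) ^ (k - 1)) y := by
    simpa using ((hasDerivAt_pow 2 y).add_const 1).rpow_const (Or.inl hpos.ne')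
  have htwo : |2 * y| ≤ y ^ 2 + 1 := by
    rw [abs_le]; constructor <;> nlinarith [sq_nonneg (y + 1), sq_nonneg (y - 1)]
  calc |deriv (fun y => (y ^ 2 + 1) ^ k) y|
      = |2 * y| * |k| * (y ^ 2 + 1) ^ (k - 1) := by
        rw [hderiv.deriv, abs_mul, abs_mul, abs_of_pos (Real.rpow_pos_of_pos hpos _)]
    _ ≤ (y ^ 2 + 1) * |k| * (y ^ 2 + 1) ^ (k - 1) := by gcongr
    _ = |k| * (y ^ 2 + 1) ^ k := by
        rw [Real.rpow_sub_one hpos.ne']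
        field_simp

theorem mul_sq_le_of_abs_deriv_le {ρ u : ℝ → ℝ} {c : ℝ} (hρ : Differentiable ℝ ρ)
    (hρ_nonneg : 0 ≤ ρ) (hρ' : ∀ y, |deriv ρ y| ≤ c * ρ y) (hu : Differentiable ℝ u)
    (hu_int : Integrable fun y => ρ y * u y ^ 2)
    (hu'_int : Integrable fun y => ρ y * deriv u y ^ 2) (x : ℝ) :
    ρ x * u x ^ 2 ≤ (c + 2) * (∫ y, ρ y * u y ^ 2) + ∫ y, ρ y * deriv u y ^ 2 := by
  set w := fun y => ρ y * u y ^ 2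
  have hw : Differentiable ℝ w := hρ.mul (hu.pow 2)
  have hw' : ∀ y, |deriv w y| ≤ (c + 1) * w y + ρ y * deriv u y ^ 2 := fun y =>
    abs_deriv_mul_sq_le (hρ y) (hu y) (hρ_nonneg y) (hρ' y)
  have hdom : Integrable fun y => (c + 1) * w y + ρ y * deriv u y ^ 2 :=
    (hu_int.const_mul _).add hu'_int
  have hw'_int : Integrable (deriv w) :=
    hdom.mono' (measurable_deriv w).aestronglyMeasurable (.of_forall hw')
  have hvar : ∫ y, |deriv w y| ≤ (c + 1) * (∫ y, w y) + ∫ y, ρ y * deriv u y ^ 2 := by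
    rw [← integral_const_mul, ← integral_add (hu_int.const_mul _) hu'_int]
    exact integral_mono hw'_int.abs hdom hw'
  linarith [apply_le_integral_add_integral_abs_deriv hw
    (fun y => mul_nonneg (hρ_nonneg y) (sq_nonneg _)) hu_int hw'_int x]

theorem sqrt_mul_add_le {C a b : ℝ} (hC : 1 ≤ C) (ha : 0 ≤ a) (hb : 0 ≤ b) :
    √(C * a + b) ≤ √C * (√a + √b) := by
  rw [← Real.sqrt_sq (add_nonneg (Real.sqrt_nonneg a) (Real.sqrt_nonneg b)),
    ← Real.sqrt_mul (by linarith)]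
  gcongr
  nlinarith [Real.sq_sqrt ha, Real.sq_sqrt hb, mul_nonneg (Real.sqrt_nonneg a) (Real.sqrt_nonneg b)]

theorem stmt_18_general (k : ℝ) :
    ∃ C : ℝ, 0 < C ∧ ∀ u : ℝ → ℝ, ContDiff ℝ 1 u →
      MeasureTheory.Integrable (fun x : ℝ => (x ^ 2 + 1) ^ k * u x ^ 2) →
      MeasureTheory.Integrable (fun x : ℝ => (x ^ 2 + 1) ^ k * deriv u x ^ 2) →
      ∀ x : ℝ, (x ^ 2 + 1) ^ (k / 2) * |u x| ≤
        C * (Real.sqrt (∫ y : ℝ, (y ^ 2 + 1) ^ k * u y ^ 2) +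
             Real.sqrt (∫ y : ℝ, (y ^ 2 + 1) ^ k * deriv u y ^ 2)) := by
  refine ⟨√(|k| + 2), by positivity, fun u hu hu_int hu'_int x => ?_⟩
  have hpos : 0 < x ^ 2 + 1 := by positivity
  have hweight : Differentiable ℝ fun y : ℝ => (y ^ 2 + 1) ^ k := fun y =>
    ((differentiableAt_id.pow 2).add_const 1).rpow_const (Or.inl (by positivity))
  have hpoint := mul_sq_le_of_abs_deriv_le hweight (fun y => by positivity)
    (abs_deriv_one_add_sq_rpow_le k) (hu.differentiable one_ne_zero) hu_int hu'_int x
  calc (x ^ 2 + 1) ^ (k / 2) * |u x| = √((x ^ 2 + 1) ^ k * u x ^ 2) := by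
        rw [Real.sqrt_mul (by positivity), Real.sqrt_sq_eq_abs, Real.sqrt_eq_rpow,
          ← Real.rpow_mul hpos.le, mul_one_div]
    _ ≤ √((|k| + 2) * (∫ y, (y ^ 2 + 1) ^ k * u y ^ 2)
          + ∫ y, (y ^ 2 + 1) ^ k * deriv u y ^ 2) :=
        Real.sqrt_le_sqrt hpoint
    _ ≤ _ := sqrt_mul_add_le (by linarith [abs_nonneg k])
        (integral_nonneg fun y => by positivity) (integral_nonneg fun y => by positivity)

/-- Weighted Sobolev embedding: for `k ≥ 0` there is `C > 0` such that every `C¹`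
function `u : ℝ → ℝ` with finite weighted `L²_k` norms of `u` and `u'` satisfies
`(x²+1)^{k/2}|u(x)| ≤ C(‖u‖_{L²_k} + ‖u'‖_{L²_k})` for all `x`. -/
theorem stmt_18 (k : ℝ) (hk : 0 ≤ k) :
    ∃ C : ℝ, 0 < C ∧ ∀ u : ℝ → ℝ, ContDiff ℝ 1 u →
      MeasureTheory.Integrable (fun x : ℝ => (x ^ 2 + 1) ^ k * u x ^ 2) →
      MeasureTheory.Integrable (fun x : ℝ => (x ^ 2 + 1) ^ k * deriv u x ^ 2) →
      ∀ x : ℝ, (x ^ 2 + 1) ^ (k / 2) * |u x| ≤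
        C * (Real.sqrt (∫ y : ℝ, (y ^ 2 + 1) ^ k * u y ^ 2) +
             Real.sqrt (∫ y : ℝ, (y ^ 2 + 1) ^ k * deriv u y ^ 2)) :=
  stmt_18_general k
end

section
/- Let ℓ ≥ 0, μ > 0 and C₀ > 0. Then there exists a constant C = C(ℓ, μ, C₀) > 0 such that for every continuously differentiable function φ : ℝ → ℝ² with |φ'(x)| ≤ C₀ e^{−μ|x|} for all x ∈ ℝ, and every τ ∈ ℝ with |τ| ≤ 1, one has ∫_ℝ (x²+1)^{ℓ} |φ(x − τ) − φ(x)|² dx ≤ C τ². -/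
/-!
By the mean value theorem and `|τ| ≤ 1`, `|φ(x - τ) - φ(x)| ≤ C₀ e^μ e^{-μ|x|} |τ|`, so the
integrand is at most `C₀² e^{2μ} τ² (x² + 1)^ℓ e^{-2μ|x|}`. The polynomial weight is absorbed by
one factor `e^{-μ|x|}`, and the remaining factor `e^{-μ|x|}` is integrable.
-/

open MeasureTheory Real Set

lemma integrable_exp_neg_mul_abs {b : ℝ} (hb : 0 < b) :
    Integrable fun x : ℝ => exp (-b * |x|) := by
  rw [← integrableOn_univ, ← Iic_union_Ioi (a := 0), integrableOn_union]
  constructor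
  · refine (integrableOn_exp_mul_Iic hb 0).congr_fun (fun x hx => ?_) measurableSet_Iic
    rw [abs_of_nonpos hx, mul_neg, neg_mul, neg_neg]
  · refine (integrableOn_exp_mul_Ioi (neg_lt_zero.2 hb) 0).congr_fun (fun x hx => ?_)
      measurableSet_Ioi
    rw [abs_of_pos hx]

lemma one_add_le_mul_exp {a s : ℝ} (ha : 0 < a) (hs : 0 ≤ s) :
    1 + s ≤ (1 + a⁻¹) * exp (a * s) :=
  calc 1 + s ≤ (1 + a⁻¹) * (1 + a * s) := by
        have : a⁻¹ * (a * s) = s := by field_simp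
        nlinarith [inv_pos.2 ha, mul_pos ha (inv_pos.2 ha)]
    _ ≤ (1 + a⁻¹) * exp (a * s) := by
        gcongr
        linarith [add_one_le_exp (a * s)]

lemma sq_add_one_rpow_le_mul_exp {ℓ μ : ℝ} (hℓ : 0 ≤ ℓ) (hμ : 0 < μ) (x : ℝ) :
    (x ^ 2 + 1) ^ ℓ ≤ (1 + (2 * ℓ + 1) / μ) ^ (2 * ℓ) * exp (μ * |x|) := by
  set a := μ / (2 * ℓ + 1)
  have ha : 0 < a := by positivity
  have hax : a * |x| * (2 * ℓ) ≤ μ * |x| := by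
    have : a * (2 * ℓ) ≤ μ := by
      rw [div_mul_eq_mul_div, div_le_iff₀ (by positivity)]
      nlinarith
    nlinarith [abs_nonneg x]
  calc (x ^ 2 + 1) ^ ℓ ≤ ((1 + |x|) ^ 2) ^ ℓ := by
        gcongr
        nlinarith [sq_abs x, abs_nonneg x]
    _ = (1 + |x|) ^ (2 * ℓ) := by
        rw [← rpow_natCast, ← rpow_mul (by positivity), Nat.cast_ofNat]
    _ ≤ ((1 + a⁻¹) * exp (a * |x|)) ^ (2 * ℓ) := by
        gcongr
        exact one_add_le_mul_exp ha (abs_nonneg x)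
    _ = (1 + (2 * ℓ + 1) / μ) ^ (2 * ℓ) * exp (a * |x| * (2 * ℓ)) := by
        rw [mul_rpow (by positivity) (exp_pos _).le, ← exp_mul, inv_div]
    _ ≤ (1 + (2 * ℓ + 1) / μ) ^ (2 * ℓ) * exp (μ * |x|) := by
        gcongr

lemma norm_sub_shift_le_of_norm_deriv_le {E : Type*} [NormedAddCommGroup E] [NormedSpace ℝ E]
    {f : ℝ → E} {C μ : ℝ} (hμ : 0 ≤ μ) (hf : Differentiable ℝ f)
    (hf' : ∀ x, ‖deriv f x‖ ≤ C * exp (-μ * |x|)) {τ : ℝ} (hτ : |τ| ≤ 1) (x : ℝ) :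
    ‖f (x - τ) - f x‖ ≤ C * exp μ * exp (-μ * |x|) * |τ| := by
  have hC : 0 ≤ C := nonneg_of_mul_nonneg_left ((norm_nonneg _).trans (hf' 0)) (exp_pos _)
  have hbound : ∀ t ∈ Metric.closedBall x 1, ‖deriv f t‖ ≤ C * exp μ * exp (-μ * |x|) := by
    intro t ht
    rw [Metric.mem_closedBall, Real.dist_eq] at ht
    refine (hf' t).trans ?_
    rw [mul_assoc, ← exp_add]
    gcongr
    nlinarith [abs_sub_abs_le_abs_sub x t, abs_sub_comm x t]
  have hmem : x - τ ∈ Metric.closedBall x 1 := by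
    rwa [Metric.mem_closedBall, Real.dist_eq, sub_sub_cancel_left, abs_neg]
  simpa [Real.norm_eq_abs] using (convex_closedBall x 1).norm_image_sub_le_of_norm_deriv_le
    (fun t _ => hf t) hbound (Metric.mem_closedBall_self zero_le_one) hmem

/-- Shift estimate for exponentially localized profiles: if `|φ'(x)| ≤ C₀ e^{−μ|x|}`,
then `∫_ℝ (x²+1)^ℓ |φ(x−τ) − φ(x)|² dx ≤ C τ²` for all `|τ| ≤ 1`. -/
theorem stmt_19 (ℓ μ C₀ : ℝ) (hℓ : 0 ≤ ℓ) (hμ : 0 < μ) (hC₀ : 0 < C₀) :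
    ∃ C : ℝ, 0 < C ∧ ∀ φ : ℝ → EuclideanSpace ℝ (Fin 2), ContDiff ℝ 1 φ →
      (∀ x : ℝ, ‖deriv φ x‖ ≤ C₀ * Real.exp (-μ * |x|)) →
      ∀ τ : ℝ, |τ| ≤ 1 →
        (∫ x : ℝ, (x ^ 2 + 1) ^ ℓ * ‖φ (x - τ) - φ x‖ ^ 2) ≤ C * τ ^ 2 := by
  set B := (1 + (2 * ℓ + 1) / μ) ^ (2 * ℓ)
  have hint := integrable_exp_neg_mul_abs hμ
  refine ⟨B * C₀ ^ 2 * exp (2 * μ) * ∫ x, exp (-μ * |x|), by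
    have := integral_exp_pos hint; positivity, ?_⟩
  intro φ hφ hφ' τ hτ
  have hpointwise (x : ℝ) : (x ^ 2 + 1) ^ ℓ * ‖φ (x - τ) - φ x‖ ^ 2 ≤
      B * C₀ ^ 2 * exp (2 * μ) * τ ^ 2 * exp (-μ * |x|) := by
    have hcancel : exp (μ * |x|) * exp (-μ * |x|) = 1 := by rw [← exp_add]; simp
    calc (x ^ 2 + 1) ^ ℓ * ‖φ (x - τ) - φ x‖ ^ 2
        ≤ (B * exp (μ * |x|)) * (C₀ * exp μ * exp (-μ * |x|) * |τ|) ^ 2 := by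
          gcongr
          · exact sq_add_one_rpow_le_mul_exp hℓ hμ x
          · exact norm_sub_shift_le_of_norm_deriv_le hμ.le (hφ.differentiable one_ne_zero) hφ' hτ x
      _ = B * C₀ ^ 2 * exp (2 * μ) * τ ^ 2 * exp (-μ * |x|) := by
          rw [show 2 * μ = μ + μ by ring, exp_add, mul_pow, sq_abs]
          linear_combination B * C₀ ^ 2 * exp μ ^ 2 * τ ^ 2 * exp (-μ * |x|) * hcancel
  calc (∫ x, (x ^ 2 + 1) ^ ℓ * ‖φ (x - τ) - φ x‖ ^ 2)
      ≤ ∫ x, B * C₀ ^ 2 * exp (2 * μ) * τ ^ 2 * exp (-μ * |x|) :=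
        integral_mono_of_nonneg (.of_forall fun x => by positivity) (hint.const_mul _)
          (.of_forall hpointwise)
    _ = (B * C₀ ^ 2 * exp (2 * μ) * ∫ x, exp (-μ * |x|)) * τ ^ 2 := by
        rw [integral_const_mul]; ring
end
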